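/- arXiv:1604.06798 — 5 statements merged into one kernel-verified Lean document; each statement's English description precedes it below -/
import Mathlib

section
/- Let a, b : ℝ² → ℝ be smooth functions of the variables (u₁,u₂). The six partial differential equations (i) a₁₂ = 0 and b₁₂ = 0, (ii) a₁₁ − b₂₂ = 0, (iii) a₂·b₁ = 0, (iv) a₁·b₁ + a·b₁₁ = 0 and a₂·b₂ + b·a₂₂ = 0 hold at every point of ℝ² if and only if there exist real constants K, A, C and smooth functions B, D : ℝ → ℝ such that a(u₁,u₂) = K·u₁² + A·u₁ + B(u₂) and b(u₁,u₂) = K·u₂² + C·u₂ + D(u₁) for all (u₁,u₂), and moreover for all (u₁,u₂): B'(u₂)·D'(u₁) = 0, the derivative with respect to u₁ of D'(u₁)·(K·u₁² + A·u₁ + B(u₂)) is zero, and the derivative with respect to u₂ of B'(u₂)·(K·u₂² + C·u₂ + D(u₁)) is zero. -/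
/-- First-order partial derivative with respect to the first variable `u₁`. -/
noncomputable def p1 (f : ℝ × ℝ → ℝ) (p : ℝ × ℝ) : ℝ := fderiv ℝ f p (1, 0)

/-- First-order partial derivative with respect to the second variable `u₂`. -/
noncomputable def p2 (f : ℝ × ℝ → ℝ) (p : ℝ × ℝ) : ℝ := fderiv ℝ f p (0, 1)

/-- Second-order partial derivative in the first variable twice: `f₁₁`. -/
noncomputable def p11 (f : ℝ × ℝ → ℝ) : ℝ × ℝ → ℝ := p1 (p1 f)

/-- Mixed second-order partial derivative: `f₁₂`. -/
noncomputable def p12 (f : ℝ × ℝ → ℝ) : ℝ × ℝ → ℝ := p1 (p2 f)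

/-- Second-order partial derivative in the second variable twice: `f₂₂`. -/
noncomputable def p22 (f : ℝ × ℝ → ℝ) : ℝ × ℝ → ℝ := p2 (p2 f)


lemma psmooth1 {f : ℝ×ℝ→ℝ} (hf : ContDiff ℝ (⊤ : ℕ∞) f) : ContDiff ℝ (⊤ : ℕ∞) (p1 f) :=
  (hf.fderiv_right (by simp)).clm_apply contDiff_const

lemma psmooth2 {f : ℝ×ℝ→ℝ} (hf : ContDiff ℝ (⊤ : ℕ∞) f) : ContDiff ℝ (⊤ : ℕ∞) (p2 f) :=
  (hf.fderiv_right (by simp)).clm_apply contDiff_const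

lemma slice1 {f : ℝ×ℝ→ℝ} (hf : ContDiff ℝ (⊤ : ℕ∞) f) (x y : ℝ) :
    HasDerivAt (fun t => f (t, y)) (p1 f (x, y)) x := by
  have h1 : HasDerivAt (fun t : ℝ => (t, y)) ((1:ℝ), (0:ℝ)) x :=
    (hasDerivAt_id x).prodMk (hasDerivAt_const x y)
  have h2 := (hf.differentiable (by simp) (x,y)).hasFDerivAt
  simpa [p1, Function.comp_def] using h2.comp_hasDerivAt x h1

lemma slice2 {f : ℝ×ℝ→ℝ} (hf : ContDiff ℝ (⊤ : ℕ∞) f) (x y : ℝ) :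
    HasDerivAt (fun t => f (x, t)) (p2 f (x, y)) y := by
  have h1 : HasDerivAt (fun t : ℝ => (x, t)) ((0:ℝ), (1:ℝ)) y :=
    (hasDerivAt_const y x).prodMk (hasDerivAt_id y)
  have h2 := (hf.differentiable (by simp) (x,y)).hasFDerivAt
  simpa [p2, Function.comp_def] using h2.comp_hasDerivAt y h1

lemma quadDeriv (K A c x : ℝ) :
    HasDerivAt (fun t => K * t ^ 2 + A * t + c) (2 * K * x + A) x := by
  have h := (((hasDerivAt_pow 2 x).const_mul K).add
    ((hasDerivAt_id x).const_mul A)).add_const c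
  refine h.congr_deriv ?_
  simp; ring

lemma linDeriv (K A x : ℝ) : HasDerivAt (fun t => 2 * K * t + A) (2 * K) x := by
  simpa using ((hasDerivAt_id x).const_mul (2*K)).add_const A

lemma derivSmooth {F : ℝ → ℝ} (hF : ContDiff ℝ (⊤ : ℕ∞) F) : ContDiff ℝ (⊤ : ℕ∞) (deriv F) := by
  have : ContDiff ℝ (((⊤ : ℕ∞) : WithTop ℕ∞) + 1) F := by
    rw [← WithTop.coe_one, ← WithTop.coe_add, top_add]; exact hF
  exact (contDiff_succ_iff_deriv.mp this).2.2

lemma quadForm (F : ℝ → ℝ) (hF : ContDiff ℝ (⊤ : ℕ∞) F) (K : ℝ)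
    (h : ∀ x, deriv (deriv F) x = 2 * K) :
    ∀ x, F x = K * x ^ 2 + deriv F 0 * x + F 0 := by
  have hF' : ContDiff ℝ (⊤ : ℕ∞) (deriv F) := derivSmooth hF
  have hd : ∀ x, deriv F x = 2 * K * x + deriv F 0 := by
    intro x
    have hg : ∀ t, HasDerivAt (fun s => deriv F s - 2 * K * s) 0 t := by
      intro t
      have h1 := ((hF'.differentiable (by simp) t).hasDerivAt).sub
        (((hasDerivAt_id t).const_mul (2*K)))
      simpa [h t, Pi.sub_def] using h1
    have := is_const_of_deriv_eq_zero (fun t => (hg t).differentiableAt)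
      (fun t => (hg t).deriv) x 0
    simp at this
    linarith
  intro x
  have hg : ∀ t, HasDerivAt (fun s => F s - (K * s ^ 2 + deriv F 0 * s)) 0 t := by
    intro t
    have h1 := ((hF.differentiable (by simp) t).hasDerivAt).sub
      ((quadDeriv K (deriv F 0) 0 t).sub_const 0)
    have h2 : deriv F t - (2 * K * t + deriv F 0) = 0 := by rw [hd t]; ring
    have h3 : (fun x => F x - (K * x ^ 2 + deriv F 0 * x + 0 - 0))
        = fun s => F s - (K * s ^ 2 + deriv F 0 * s) := by funext s; ring
    rw [show (F - fun x => K * x ^ 2 + deriv F 0 * x + 0 - 0) = fun s => F s - (K * s ^ 2 + deriv F 0 * s) from h3, h2] at h1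
    exact h1
  have := is_const_of_deriv_eq_zero (fun t => (hg t).differentiableAt)
    (fun t => (hg t).deriv) x 0
  simp at this
  linarith

lemma sep {f : ℝ×ℝ→ℝ} (hf : ContDiff ℝ (⊤ : ℕ∞) f) (h12 : ∀ p, p12 f p = 0) :
    ∀ x y, f (x, y) = (f (x,0) - f (0,0)) + f (0,y) := by
  have hp2 : ∀ x y, p2 f (x,y) = p2 f (0,y) := by
    intro x y
    exact is_const_of_deriv_eq_zero
      (fun t => (slice1 (psmooth2 hf) t y).differentiableAt)
      (fun t => by rw [(slice1 (psmooth2 hf) t y).deriv]; exact h12 (t,y)) x 0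
  intro x y
  have hc : ∀ s, HasDerivAt (fun s => f (x,s) - f (0,s)) 0 s := fun s => by
    have := (slice2 hf x s).sub (slice2 hf 0 s)
    rw [hp2 x s, sub_self] at this; exact this
  have h := is_const_of_deriv_eq_zero (fun s => (hc s).differentiableAt)
    (fun s => (hc s).deriv) y 0
  linarith


/-- A Walker metric with `c = 0` and `a, b` functions of `(u₁,u₂)` is Einstein iff
`a, b` have the stated quadratic-plus-one-variable form with `B, D` satisfying the PDEs. -/
theorem walker_einstein_c_zero_iff (a b : ℝ × ℝ → ℝ)
    (ha : ContDiff ℝ (⊤ : ℕ∞) a) (hb : ContDiff ℝ (⊤ : ℕ∞) b) :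
    (∀ p : ℝ × ℝ,
      p12 a p = 0 ∧ p12 b p = 0 ∧
      p11 a p - p22 b p = 0 ∧
      p2 a p * p1 b p = 0 ∧
      p1 a p * p1 b p + a p * p11 b p = 0 ∧
      p2 a p * p2 b p + b p * p22 a p = 0)
    ↔
    ∃ (K A C : ℝ) (B D : ℝ → ℝ), ContDiff ℝ (⊤ : ℕ∞) B ∧ ContDiff ℝ (⊤ : ℕ∞) D ∧
      (∀ p : ℝ × ℝ,
        a p = K * p.1 ^ 2 + A * p.1 + B p.2 ∧
        b p = K * p.2 ^ 2 + C * p.2 + D p.1) ∧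
      (∀ p : ℝ × ℝ,
        deriv B p.2 * deriv D p.1 = 0 ∧
        deriv (fun u1 => deriv D u1 * (K * u1 ^ 2 + A * u1 + B p.2)) p.1 = 0 ∧
        deriv (fun u2 => deriv B u2 * (K * u2 ^ 2 + C * u2 + D p.1)) p.2 = 0) := by
  constructor
  · intro H
    -- separated pieces
    set Fa : ℝ → ℝ := fun x => a (x, 0) with hFadef
    set B : ℝ → ℝ := fun y => a (0, y) with hBdef
    set D : ℝ → ℝ := fun x => b (x, 0) with hDdef
    set Gb : ℝ → ℝ := fun y => b (0, y) with hGbdef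
    have hFa : ContDiff ℝ (⊤ : ℕ∞) Fa := ha.comp (contDiff_id.prodMk contDiff_const)
    have hB : ContDiff ℝ (⊤ : ℕ∞) B := ha.comp (contDiff_const.prodMk contDiff_id)
    have hD : ContDiff ℝ (⊤ : ℕ∞) D := hb.comp (contDiff_id.prodMk contDiff_const)
    have hGb : ContDiff ℝ (⊤ : ℕ∞) Gb := hb.comp (contDiff_const.prodMk contDiff_id)
    have hsa : ∀ x y, a (x, y) = Fa x + B y - Fa 0 := by
      intro x y; have := sep ha (fun p => (H p).1) x y
      simp only [hFadef, hBdef]; linarith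
    have hsb : ∀ x y, b (x, y) = D x + Gb y - D 0 := by
      intro x y; have := sep hb (fun p => (H p).2.1) x y
      have e : b (0,0) = D 0 := rfl
      simp only [hDdef, hGbdef]; linarith
    -- slice derivative identities
    have h1a : ∀ x y, p1 a (x, y) = deriv Fa x := by
      intro x y
      have e : (fun t => a (t, y)) = fun t => Fa t + (B y - Fa 0) := by
        funext t; rw [hsa t y]; ring
      rw [← (slice1 ha x y).deriv, e, deriv_add_const]
    have h2a : ∀ x y, p2 a (x, y) = deriv B y := by
      intro x y
      have e : (fun s => a (x, s)) = fun s => (Fa x - Fa 0) + B s := by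
        funext s; rw [hsa x s]; ring
      rw [← (slice2 ha x y).deriv, e, deriv_const_add]
    have h1b : ∀ x y, p1 b (x, y) = deriv D x := by
      intro x y
      have e : (fun t => b (t, y)) = fun t => D t + (Gb y - D 0) := by
        funext t; rw [hsb t y]; ring
      rw [← (slice1 hb x y).deriv, e, deriv_add_const]
    have h2b : ∀ x y, p2 b (x, y) = deriv Gb y := by
      intro x y
      have e : (fun s => b (x, s)) = fun s => (D x - D 0) + Gb s := by
        funext s; rw [hsb x s]; ring
      rw [← (slice2 hb x y).deriv, e, deriv_const_add]
    -- second derivatives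
    have h11a : ∀ x y, p11 a (x, y) = deriv (deriv Fa) x := by
      intro x y
      have e : (fun t => p1 a (t, y)) = fun t => deriv Fa t := by
        funext t; exact h1a t y
      rw [show p11 a (x,y) = p1 (p1 a) (x,y) from rfl,
        ← (slice1 (psmooth1 ha) x y).deriv, e]
    have h22a : ∀ x y, p22 a (x, y) = deriv (deriv B) y := by
      intro x y
      have e : (fun s => p2 a (x, s)) = fun s => deriv B s := by
        funext s; exact h2a x s
      rw [show p22 a (x,y) = p2 (p2 a) (x,y) from rfl,
        ← (slice2 (psmooth2 ha) x y).deriv, e]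
    have h11b : ∀ x y, p11 b (x, y) = deriv (deriv D) x := by
      intro x y
      have e : (fun t => p1 b (t, y)) = fun t => deriv D t := by
        funext t; exact h1b t y
      rw [show p11 b (x,y) = p1 (p1 b) (x,y) from rfl,
        ← (slice1 (psmooth1 hb) x y).deriv, e]
    have h22b : ∀ x y, p22 b (x, y) = deriv (deriv Gb) y := by
      intro x y
      have e : (fun s => p2 b (x, s)) = fun s => deriv Gb s := by
        funext s; exact h2b x s
      rw [show p22 b (x,y) = p2 (p2 b) (x,y) from rfl,
        ← (slice2 (psmooth2 hb) x y).deriv, e]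
    -- constant second derivative
    set K : ℝ := deriv (deriv Fa) 0 / 2 with hKdef
    have hmix : ∀ x y, deriv (deriv Fa) x = deriv (deriv Gb) y := by
      intro x y
      have := (H (x, y)).2.2.1
      rw [h11a x y, h22b x y] at this
      linarith
    have hFa'' : ∀ x, deriv (deriv Fa) x = 2 * K := by
      intro x; rw [hmix x 0, ← hmix 0 0, hKdef]; ring
    have hGb'' : ∀ y, deriv (deriv Gb) y = 2 * K := by
      intro y; rw [← hmix 0 y, hKdef]; ring
    set A : ℝ := deriv Fa 0 with hAdef
    set C : ℝ := deriv Gb 0 with hCdef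
    have hFaq := quadForm Fa hFa K hFa''
    have hGbq := quadForm Gb hGb K hGb''
    -- closed forms for a and b
    have hFa0 : Fa 0 = B 0 := rfl
    have hGb0 : Gb 0 = D 0 := rfl
    have haf : ∀ x y, a (x, y) = K * x ^ 2 + A * x + B y := by
      intro x y; rw [hsa x y, hFaq x]; simp [hAdef]; ring
    have hbf : ∀ x y, b (x, y) = K * y ^ 2 + C * y + D x := by
      intro x y; rw [hsb x y, hGbq y, hGb0]; simp [hCdef]; ring
    -- first derivatives in closed form
    have hFad : ∀ x, deriv Fa x = 2 * K * x + A := by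
      intro x
      have e : Fa = fun x => K * x ^ 2 + A * x + Fa 0 := funext hFaq
      rw [e]; exact (quadDeriv K A (Fa 0) x).deriv
    have hGbd : ∀ y, deriv Gb y = 2 * K * y + C := by
      intro y
      have e : Gb = fun y => K * y ^ 2 + C * y + Gb 0 := funext hGbq
      rw [e]; exact (quadDeriv K C (Gb 0) y).deriv
    refine ⟨K, A, C, B, D, hB, hD, fun p => ⟨haf p.1 p.2, hbf p.1 p.2⟩, ?_⟩
    rintro ⟨x, y⟩
    have hDd : HasDerivAt (deriv D) (deriv (deriv D) x) x :=
      ((derivSmooth hD).differentiable (by simp) x).hasDerivAt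
    have hBd : HasDerivAt (deriv B) (deriv (deriv B) y) y :=
      ((derivSmooth hB).differentiable (by simp) y).hasDerivAt
    obtain ⟨_, _, _, H4, H5, H6⟩ := H (x, y)
    rw [h2a x y, h1b x y] at H4
    rw [h1a x y, h1b x y, h11b x y, hFad x, haf x y] at H5
    rw [h2a x y, h2b x y, h22a x y, hGbd y, hbf x y] at H6
    refine ⟨H4, ?_, ?_⟩
    · have := (hDd.mul (quadDeriv K A (B y) x)).deriv
      rw [show deriv (fun u1 => deriv D u1 * (K * u1 ^ 2 + A * u1 + B (x, y).2)) (x, y).1 = deriv (deriv D * fun t => K * t ^ 2 + A * t + B y) x from rfl, this]; nlinarith [H5]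
    · have := (hBd.mul (quadDeriv K C (D x) y)).deriv
      rw [show deriv (fun u2 => deriv B u2 * (K * u2 ^ 2 + C * u2 + D (x, y).1)) (x, y).2 = deriv (deriv B * fun t => K * t ^ 2 + C * t + D x) y from rfl, this]; nlinarith [H6]
  · rintro ⟨K, A, C, B, D, hB, hD, hform, hcond⟩
    rintro ⟨x, y⟩
    have ea : ∀ x y : ℝ, a (x, y) = K * x ^ 2 + A * x + B y := fun x y => (hform (x,y)).1
    have eb : ∀ x y : ℝ, b (x, y) = K * y ^ 2 + C * y + D x := fun x y => (hform (x,y)).2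
    have h1a : ∀ x y : ℝ, p1 a (x, y) = 2 * K * x + A := by
      intro x y
      have e : (fun t => a (t, y)) = fun t => K * t ^ 2 + A * t + B y := by
        funext t; exact ea t y
      rw [← (slice1 ha x y).deriv, e, (quadDeriv K A (B y) x).deriv]
    have h2a : ∀ x y : ℝ, p2 a (x, y) = deriv B y := by
      intro x y
      have e : (fun s => a (x, s)) = fun s => (K * x ^ 2 + A * x) + B s := by
        funext s; rw [ea x s]
      rw [← (slice2 ha x y).deriv, e, deriv_const_add]
    have h1b : ∀ x y : ℝ, p1 b (x, y) = deriv D x := by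
      intro x y
      have e : (fun t => b (t, y)) = fun t => (K * y ^ 2 + C * y) + D t := by
        funext t; rw [eb t y]
      rw [← (slice1 hb x y).deriv, e, deriv_const_add]
    have h2b : ∀ x y : ℝ, p2 b (x, y) = 2 * K * y + C := by
      intro x y
      have e : (fun s => b (x, s)) = fun s => K * s ^ 2 + C * s + D x := by
        funext s; exact eb x s
      rw [← (slice2 hb x y).deriv, e, (quadDeriv K C (D x) y).deriv]
    have h12a : p12 a (x, y) = 0 := by
      have e : (fun t => p2 a (t, y)) = fun _ => deriv B y := by
        funext t; exact h2a t y
      rw [show p12 a (x,y) = p1 (p2 a) (x,y) from rfl,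
        ← (slice1 (psmooth2 ha) x y).deriv, e, deriv_const]
    have h12b : p12 b (x, y) = 0 := by
      have e : (fun t => p2 b (t, y)) = fun _ => 2 * K * y + C := by
        funext t; exact h2b t y
      rw [show p12 b (x,y) = p1 (p2 b) (x,y) from rfl,
        ← (slice1 (psmooth2 hb) x y).deriv, e, deriv_const]
    have h11a : p11 a (x, y) = 2 * K := by
      have e : (fun t => p1 a (t, y)) = fun t => 2 * K * t + A := by
        funext t; exact h1a t y
      rw [show p11 a (x,y) = p1 (p1 a) (x,y) from rfl,
        ← (slice1 (psmooth1 ha) x y).deriv, e, (linDeriv K A x).deriv]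
    have h22b : p22 b (x, y) = 2 * K := by
      have e : (fun s => p2 b (x, s)) = fun s => 2 * K * s + C := by
        funext s; exact h2b x s
      rw [show p22 b (x,y) = p2 (p2 b) (x,y) from rfl,
        ← (slice2 (psmooth2 hb) x y).deriv, e, (linDeriv K C y).deriv]
    have h11b : p11 b (x, y) = deriv (deriv D) x := by
      have e : (fun t => p1 b (t, y)) = fun t => deriv D t := by
        funext t; exact h1b t y
      rw [show p11 b (x,y) = p1 (p1 b) (x,y) from rfl,
        ← (slice1 (psmooth1 hb) x y).deriv, e]
    have h22a : p22 a (x, y) = deriv (deriv B) y := by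
      have e : (fun s => p2 a (x, s)) = fun s => deriv B s := by
        funext s; exact h2a x s
      rw [show p22 a (x,y) = p2 (p2 a) (x,y) from rfl,
        ← (slice2 (psmooth2 ha) x y).deriv, e]
    obtain ⟨hc1, hc2, hc3⟩ := hcond (x, y)
    have hDd : HasDerivAt (deriv D) (deriv (deriv D) x) x :=
      ((derivSmooth hD).differentiable (by simp) x).hasDerivAt
    have hBd : HasDerivAt (deriv B) (deriv (deriv B) y) y :=
      ((derivSmooth hB).differentiable (by simp) y).hasDerivAt
    have hc2' := (hDd.mul (quadDeriv K A (B y) x)).deriv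
    rw [show deriv (deriv D * fun t => K * t ^ 2 + A * t + B y) x = 0 from hc2] at hc2'
    have hc3' := (hBd.mul (quadDeriv K C (D x) y)).deriv
    rw [show deriv (deriv B * fun t => K * t ^ 2 + C * t + D x) y = 0 from hc3] at hc3'
    refine ⟨h12a, h12b, by rw [h11a, h22b]; ring, ?_, ?_, ?_⟩
    · rw [h2a x y, h1b x y]; exact hc1
    · rw [h1a x y, h1b x y, h11b, ea x y]; nlinarith [hc2']
    · rw [h2a x y, h2b x y, h22a, eb x y]; nlinarith [hc3']
end

section
/- Let a, b : ℝ² → ℝ be smooth functions of the variables (u₁,u₂) satisfying a₁₂ = 0, b₁₂ = 0, and a₁₁ = b₂₂ at every point of ℝ². Then there exist real constants K, A, C and smooth functions B, D : ℝ → ℝ such that a(u₁,u₂) = K·u₁² + A·u₁ + B(u₂) and b(u₁,u₂) = K·u₂² + C·u₂ + D(u₁) for all (u₁,u₂). -/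
lemma hasDerivAt_fst' (f : ℝ × ℝ → ℝ) (hf : Differentiable ℝ f) (y t : ℝ) :
    HasDerivAt (fun s => f (s, y)) (p1 f (t, y)) t := by
  have h1 : HasDerivAt (fun s : ℝ => (s, y)) ((1 : ℝ), (0 : ℝ)) t := by
    simpa using ((hasDerivAt_id t).prodMk (hasDerivAt_const t y))
  exact (hf (t, y)).hasFDerivAt.comp_hasDerivAt t h1

lemma hasDerivAt_snd' (f : ℝ × ℝ → ℝ) (hf : Differentiable ℝ f) (x t : ℝ) :
    HasDerivAt (fun s => f (x, s)) (p2 f (x, t)) t := by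
  have h1 : HasDerivAt (fun s : ℝ => (x, s)) ((0 : ℝ), (1 : ℝ)) t := by
    simpa using ((hasDerivAt_const t x).prodMk (hasDerivAt_id t))
  exact (hf (x, t)).hasFDerivAt.comp_hasDerivAt t h1

lemma const1 (f : ℝ × ℝ → ℝ) (hf : Differentiable ℝ f) (h : ∀ p, p1 f p = 0)
    (x x' y : ℝ) : f (x, y) = f (x', y) := by
  have hd : ∀ t, HasDerivAt (fun s => f (s, y)) 0 t := fun t => by
    simpa [h (t, y)] using hasDerivAt_fst' f hf y t
  exact is_const_of_deriv_eq_zero (fun t => (hd t).differentiableAt)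
    (fun t => (hd t).deriv) x x'

lemma const2 (f : ℝ × ℝ → ℝ) (hf : Differentiable ℝ f) (h : ∀ p, p2 f p = 0)
    (x y y' : ℝ) : f (x, y) = f (x, y') := by
  have hd : ∀ t, HasDerivAt (fun s => f (x, s)) 0 t := fun t => by
    simpa [h (x, t)] using hasDerivAt_snd' f hf x t
  exact is_const_of_deriv_eq_zero (fun t => (hd t).differentiableAt)
    (fun t => (hd t).deriv) y y'

lemma fderiv_eval (f : ℝ × ℝ → ℝ) (hf : ContDiff ℝ (⊤ : ℕ∞) f) (p : ℝ × ℝ) (v w : ℝ × ℝ) :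
    fderiv ℝ (fun q => fderiv ℝ f q v) p w = fderiv ℝ (fderiv ℝ f) p w v := by
  have hdf : Differentiable ℝ (fderiv ℝ f) :=
    (hf.fderiv_right (m := 1) (WithTop.coe_le_coe.mpr le_top)).differentiable one_ne_zero
  have h2 : HasFDerivAt (fun q => fderiv ℝ f q v)
      ((ContinuousLinearMap.apply ℝ ℝ v).comp (fderiv ℝ (fderiv ℝ f) p)) p :=
    ((ContinuousLinearMap.apply ℝ ℝ v).hasFDerivAt).comp p (hdf p).hasFDerivAt
  rw [h2.fderiv]; rfl

lemma symm_partial (f : ℝ × ℝ → ℝ) (hf : ContDiff ℝ (⊤ : ℕ∞) f) (p : ℝ × ℝ) :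
    p1 (p2 f) p = p2 (p1 f) p := by
  have hdiff : Differentiable ℝ f := hf.differentiable (by simp)
  have hdf : Differentiable ℝ (fderiv ℝ f) :=
    (hf.fderiv_right (m := 1) (WithTop.coe_le_coe.mpr le_top)).differentiable one_ne_zero
  have hsym := second_derivative_symmetric (f := f) (f' := fderiv ℝ f)
    (f'' := fderiv ℝ (fderiv ℝ f) p) (fun y => (hdiff y).hasFDerivAt)
    (hdf p).hasFDerivAt (1, 0) (0, 1)
  show fderiv ℝ (fun q => fderiv ℝ f q (0,1)) p (1,0)
      = fderiv ℝ (fun q => fderiv ℝ f q (1,0)) p (0,1)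
  rw [fderiv_eval f hf p (0,1) (1,0), fderiv_eval f hf p (1,0) (0,1), hsym]

lemma contDiff_p1 (f : ℝ × ℝ → ℝ) (hf : ContDiff ℝ (⊤ : ℕ∞) f) : ContDiff ℝ (⊤ : ℕ∞) (p1 f) :=
  (hf.fderiv_right ((by simp))).clm_apply contDiff_const

lemma contDiff_p2 (f : ℝ × ℝ → ℝ) (hf : ContDiff ℝ (⊤ : ℕ∞) f) : ContDiff ℝ (⊤ : ℕ∞) (p2 f) :=
  (hf.fderiv_right ((by simp))).clm_apply contDiff_const

/-- Step 1 in the characterization of Einstein Walker metrics with `c = 0`: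
if `a₁₂ = 0`, `b₁₂ = 0` and `a₁₁ = b₂₂`, then `a` and `b` have the stated form. -/
theorem walker_einstein_step1 (a b : ℝ × ℝ → ℝ)
    (ha : ContDiff ℝ (⊤ : ℕ∞) a) (hb : ContDiff ℝ (⊤ : ℕ∞) b)
    (ha12 : ∀ p : ℝ × ℝ, p12 a p = 0)
    (hb12 : ∀ p : ℝ × ℝ, p12 b p = 0)
    (hab : ∀ p : ℝ × ℝ, p11 a p = p22 b p) :
    ∃ (K A C : ℝ) (B D : ℝ → ℝ), ContDiff ℝ (⊤ : ℕ∞) B ∧ ContDiff ℝ (⊤ : ℕ∞) D ∧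
      (∀ p : ℝ × ℝ,
        a p = K * p.1 ^ 2 + A * p.1 + B p.2 ∧
        b p = K * p.2 ^ 2 + C * p.2 + D p.1) := by
  have hp1a : ContDiff ℝ (⊤ : ℕ∞) (p1 a) := contDiff_p1 a ha
  have hp2a : ContDiff ℝ (⊤ : ℕ∞) (p2 a) := contDiff_p2 a ha
  have hp1b : ContDiff ℝ (⊤ : ℕ∞) (p1 b) := contDiff_p1 b hb
  have hp2b : ContDiff ℝ (⊤ : ℕ∞) (p2 b) := contDiff_p2 b hb
  have hp11a : ContDiff ℝ (⊤ : ℕ∞) (p11 a) := contDiff_p1 _ hp1a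
  -- `p2 (p1 a) = 0` everywhere (symmetry of second derivatives)
  have hz_a : ∀ p, p2 (p1 a) p = 0 := fun p => by
    rw [← symm_partial a ha p]; exact ha12 p
  -- `p1 (p2 b) = 0` everywhere
  have hz_b : ∀ p, p1 (p2 b) p = 0 := hb12
  -- `p2 (p11 a) = 0` everywhere
  have hfz_a : p2 (p1 a) = fun _ : ℝ × ℝ => (0 : ℝ) := funext hz_a
  have hg2 : ∀ p, p2 (p11 a) p = 0 := fun p => by
    have h := (symm_partial (p1 a) hp1a p).symm
    show p2 (p1 (p1 a)) p = 0
    rw [h]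
    show p1 (p2 (p1 a)) p = 0
    rw [hfz_a]
    simp [p1]
  -- `p1 (p22 b) = 0` everywhere
  have hfz_b : p1 (p2 b) = fun _ : ℝ × ℝ => (0 : ℝ) := funext hz_b
  have hg1' : ∀ p, p1 (p22 b) p = 0 := fun p => by
    show p1 (p2 (p2 b)) p = 0
    rw [symm_partial (p2 b) hp2b p]
    show p2 (p1 (p2 b)) p = 0
    rw [hfz_b]
    simp [p2]
  have hab' : p11 a = p22 b := funext hab
  have hg1 : ∀ p, p1 (p11 a) p = 0 := fun p => by rw [hab']; exact hg1' p
  -- `p11 a` is constant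
  set K2 : ℝ := p11 a (0, 0) with hK2
  have hKconst : ∀ p : ℝ × ℝ, p11 a p = K2 := by
    intro p
    have hd : Differentiable ℝ (p11 a) := hp11a.differentiable (by simp)
    calc p11 a p = p11 a (p.1, p.2) := by rw [Prod.mk.eta]
      _ = p11 a (p.1, 0) := const2 _ hd hg2 p.1 p.2 0
      _ = p11 a (0, 0) := const1 _ hd hg1 p.1 0 0
  set A : ℝ := p1 a (0, 0) with hA
  set C : ℝ := p2 b (0, 0) with hC
  refine ⟨K2 / 2, A, C, fun y => a (0, y), fun x => b (x, 0),
    ha.comp (contDiff_const.prodMk contDiff_id),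
    hb.comp (contDiff_id.prodMk contDiff_const), ?_⟩
  have hda : Differentiable ℝ a := ha.differentiable (by simp)
  have hdb : Differentiable ℝ b := hb.differentiable (by simp)
  have hdp1a : Differentiable ℝ (p1 a) := hp1a.differentiable (by simp)
  have hdp2b : Differentiable ℝ (p2 b) := hp2b.differentiable (by simp)
  -- p1 a (s, 0) = K2 * s + A
  have halpha : ∀ s : ℝ, p1 a (s, 0) = K2 * s + A := by
    intro s
    have hder : ∀ t : ℝ, HasDerivAt (fun u => p1 a (u, 0) - (K2 * u + A)) 0 t := by
      intro t
      have h1 : HasDerivAt (fun u : ℝ => p1 a (u, 0)) K2 t := by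
        have := hasDerivAt_fst' (p1 a) hdp1a 0 t
        rwa [show p1 (p1 a) (t, 0) = K2 from hKconst (t, 0)] at this
      have h2 : HasDerivAt (fun u : ℝ => K2 * u + A) K2 t := by
        simpa using ((hasDerivAt_id t).const_mul K2).add_const A
      simpa using h1.fun_sub h2
    have := is_const_of_deriv_eq_zero (fun t => (hder t).differentiableAt)
      (fun t => (hder t).deriv) s 0
    have h0 : p1 a (0, 0) - (K2 * 0 + A) = 0 := by simp [hA]
    linarith [this, h0]
  -- p1 a (x, y) = K2 * x + A for all (x, y)
  have hp1a_val : ∀ x y : ℝ, p1 a (x, y) = K2 * x + A := by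
    intro x y
    rw [const2 (p1 a) hdp1a hz_a x y 0, halpha x]
  -- p2 b (0, s) = K2 * s + C
  have hbeta : ∀ s : ℝ, p2 b (0, s) = K2 * s + C := by
    intro s
    have hder : ∀ t : ℝ, HasDerivAt (fun u => p2 b (0, u) - (K2 * u + C)) 0 t := by
      intro t
      have h1 : HasDerivAt (fun u : ℝ => p2 b (0, u)) K2 t := by
        have := hasDerivAt_snd' (p2 b) hdp2b 0 t
        have he : p2 (p2 b) (0, t) = K2 := by
          have := hKconst (0, t); rw [hab'] at this; exact this
        rwa [he] at this
      have h2 : HasDerivAt (fun u : ℝ => K2 * u + C) K2 t := by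
        simpa using ((hasDerivAt_id t).const_mul K2).add_const C
      simpa using h1.fun_sub h2
    have := is_const_of_deriv_eq_zero (fun t => (hder t).differentiableAt)
      (fun t => (hder t).deriv) s 0
    have h0 : p2 b (0, 0) - (K2 * 0 + C) = 0 := by simp [hC]
    linarith [this, h0]
  have hp2b_val : ∀ x y : ℝ, p2 b (x, y) = K2 * y + C := by
    intro x y
    rw [const1 (p2 b) hdp2b hz_b x 0 y, hbeta y]
  rintro ⟨x, y⟩
  constructor
  · -- a (x, y) = K2/2 * x^2 + A * x + a (0, y)
    have hder : ∀ t : ℝ, HasDerivAt (fun u => a (u, y) - (K2 / 2 * u ^ 2 + A * u)) 0 t := by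
      intro t
      have h1 : HasDerivAt (fun u : ℝ => a (u, y)) (K2 * t + A) t := by
        have := hasDerivAt_fst' a hda y t
        rwa [hp1a_val t y] at this
      have h2 : HasDerivAt (fun u : ℝ => K2 / 2 * u ^ 2 + A * u) (K2 * t + A) t := by
        have hp : HasDerivAt (fun u : ℝ => u ^ 2) (2 * t) t := by
          simpa using hasDerivAt_pow 2 t
        have := (hp.const_mul (K2 / 2)).fun_add ((hasDerivAt_id t).const_mul A)
        exact this.congr_deriv (by ring)
      simpa using h1.fun_sub h2
    have := is_const_of_deriv_eq_zero (fun t => (hder t).differentiableAt)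
      (fun t => (hder t).deriv) x 0
    have h0 : a (0, y) - (K2 / 2 * 0 ^ 2 + A * 0) = a (0, y) := by ring_nf
    simp only at *
    linarith [this]
  · -- b (x, y) = K2/2 * y^2 + C * y + b (x, 0)
    have hder : ∀ t : ℝ, HasDerivAt (fun u => b (x, u) - (K2 / 2 * u ^ 2 + C * u)) 0 t := by
      intro t
      have h1 : HasDerivAt (fun u : ℝ => b (x, u)) (K2 * t + C) t := by
        have := hasDerivAt_snd' b hdb x t
        rwa [hp2b_val x t] at this
      have h2 : HasDerivAt (fun u : ℝ => K2 / 2 * u ^ 2 + C * u) (K2 * t + C) t := by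
        have hp : HasDerivAt (fun u : ℝ => u ^ 2) (2 * t) t := by
          simpa using hasDerivAt_pow 2 t
        have := (hp.const_mul (K2 / 2)).fun_add ((hasDerivAt_id t).const_mul C)
        exact this.congr_deriv (by ring)
      simpa using h1.fun_sub h2
    have := is_const_of_deriv_eq_zero (fun t => (hder t).differentiableAt)
      (fun t => (hder t).deriv) y 0
    simp only at *
    linarith [this]
end

section
/- Let a, b, c : ℝ² → ℝ be smooth functions of the variables (u₁,u₂). The following nine partial differential equations hold at every point of ℝ²: (1) c₁₂ = 0; (2) b₁₁ = 0; (3) a₂₂ = 0; (4) a₁₁ + b₂₂ − c₁₂ = 0; (5) −b₁₂ + c₁₁ = 0; (6) a₁₂ − c₂₂ = 0; (7) c·a₁₁/12 − a·b₁₂/4 − c·b₂₂/6 + 5c·c₁₂/12 + b·c₂₂/4 = 0; (8) c·a₁₁/6 + b·a₁₂/4 − c·b₂₂/12 − a·c₁₁/4 − 5c·c₁₂/12 = 0; (9) b·a₁c₂ − c·a₁b₂ + c·a₂b₁ − b·a₂c₁ − a·b₁c₂ + a·b₂c₁ = 0; if and only if there exist real constants E, F, G, H, I, J, K, L, M, N,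 P, Q, R such that for all (u₁,u₂): a(u₁,u₂) = (I/2)u₁² + J·u₁ + E·u₁u₂ + F·u₂ + K, b(u₁,u₂) = −(I/2)u₂² + L·u₂ + M·u₁u₂ + N·u₁ + R, c(u₁,u₂) = (M/2)u₁² + P·u₁ + (E/2)u₂² + G·u₂ + (Q + H), and the constants satisfy E·N − J·M + I·P = 0, E·L − F·M + I·G = 0, E·R − K·M + I·(H+Q) = 0, and K·(L·P − N·G) + R·(J·G − F·P) + (Q+H)·(F·N − J·L) = 0. -/
lemma smooth_p1 {f : ℝ × ℝ → ℝ} (hf : ContDiff ℝ (⊤ : ℕ∞) f) : ContDiff ℝ (⊤ : ℕ∞) (p1 f) :=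
  (hf.fderiv_right (by simp)).clm_apply contDiff_const

lemma smooth_p2 {f : ℝ × ℝ → ℝ} (hf : ContDiff ℝ (⊤ : ℕ∞) f) : ContDiff ℝ (⊤ : ℕ∞) (p2 f) :=
  (hf.fderiv_right (by simp)).clm_apply contDiff_const

lemma swap12 {f : ℝ × ℝ → ℝ} (hf : ContDiff ℝ (⊤ : ℕ∞) f) (p : ℝ × ℝ) :
    p1 (p2 f) p = p2 (p1 f) p := by
  have hd : DifferentiableAt ℝ (fderiv ℝ f) p :=
    ((hf.fderiv_right (m := (⊤ : ℕ∞)) (by simp)).differentiable (by simp)).differentiableAt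
  have hsym := (hf.contDiffAt (x := p)).isSymmSndFDerivAt (by rw [minSmoothness_of_isRCLikeNormedField]; exact WithTop.coe_le_coe.mpr (le_top : (2 : ℕ∞) ≤ ⊤))
  have h1 : p1 (p2 f) p = fderiv ℝ (fderiv ℝ f) p (1, 0) (0, 1) := by
    unfold p1 p2
    rw [fderiv_clm_apply hd (differentiableAt_const _)]
    simp
  have h2 : p2 (p1 f) p = fderiv ℝ (fderiv ℝ f) p (0, 1) (1, 0) := by
    unfold p1 p2
    rw [fderiv_clm_apply hd (differentiableAt_const _)]
    simp
  rw [h1, h2, hsym]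

lemma clm_zero (L : ℝ × ℝ →L[ℝ] ℝ) (h1 : L (1, 0) = 0) (h2 : L (0, 1) = 0) : L = 0 := by
  refine ContinuousLinearMap.ext fun v => ?_
  have hv : v = v.1 • ((1:ℝ), (0:ℝ)) + v.2 • ((0:ℝ), (1:ℝ)) := by
    simp [Prod.ext_iff]
  calc L v = L (v.1 • ((1:ℝ), (0:ℝ)) + v.2 • ((0:ℝ), (1:ℝ))) := by rw [← hv]
    _ = v.1 • L (1, 0) + v.2 • L (0, 1) := by
          rw [map_add, map_smul, map_smul]
    _ = 0 := by rw [h1, h2]; simp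

lemma const_of {f : ℝ × ℝ → ℝ} (hf : ContDiff ℝ (⊤ : ℕ∞) f)
    (h1 : ∀ q, p1 f q = 0) (h2 : ∀ q, p2 f q = 0) (p : ℝ × ℝ) : f p = f 0 :=
  is_const_of_fderiv_eq_zero (hf.differentiable (by simp))
    (fun q => clm_zero _ (h1 q) (h2 q)) p 0

lemma p1_zero (p : ℝ × ℝ) : p1 (fun _ => (0:ℝ)) p = 0 := by simp [p1]
lemma p2_zero (p : ℝ × ℝ) : p2 (fun _ => (0:ℝ)) p = 0 := by simp [p2]
lemma p1_neg (g : ℝ × ℝ → ℝ) (p : ℝ × ℝ) : p1 (fun x => -(g x)) p = -(p1 g p) := by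
  simp [p1, fderiv_neg]
lemma p1_sub {f g : ℝ × ℝ → ℝ} {p : ℝ × ℝ} (hf : DifferentiableAt ℝ f p)
    (hg : DifferentiableAt ℝ g p) : p1 (fun q => f q - g q) p = p1 f p - p1 g p := by
  simp [p1, fderiv_fun_sub hf hg]
lemma p2_sub {f g : ℝ × ℝ → ℝ} {p : ℝ × ℝ} (hf : DifferentiableAt ℝ f p)
    (hg : DifferentiableAt ℝ g p) : p2 (fun q => f q - g q) p = p2 f p - p2 g p := by
  simp [p2, fderiv_fun_sub hf hg]

lemma zero_of_derivs {f : ℝ × ℝ → ℝ} (hf : ContDiff ℝ (⊤ : ℕ∞) f)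
    (h11 : ∀ q, p1 (p1 f) q = 0) (h12 : ∀ q, p1 (p2 f) q = 0)
    (h22 : ∀ q, p2 (p2 f) q = 0) (h0 : f 0 = 0)
    (hd1 : p1 f 0 = 0) (hd2 : p2 f 0 = 0) : ∀ p, f p = 0 := by
  have h21 : ∀ q, p2 (p1 f) q = 0 := fun q => by rw [← swap12 hf]; exact h12 q
  have c1 : ∀ q, p1 f q = 0 := fun q => (const_of (smooth_p1 hf) h11 h21 q).trans hd1
  have c2 : ∀ q, p2 f q = 0 := fun q => (const_of (smooth_p2 hf) h12 h22 q).trans hd2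
  exact fun p => (const_of hf c1 c2 p).trans h0

def quad (α β γ δ ε ζ : ℝ) : ℝ × ℝ → ℝ :=
  fun q => α * (q.1 * q.1) + β * q.1 + γ * (q.1 * q.2) + δ * (q.2 * q.2) + ε * q.2 + ζ

lemma quad_hasFDerivAt (α β γ δ ε ζ : ℝ) (p : ℝ × ℝ) :
    HasFDerivAt (quad α β γ δ ε ζ)
      ((2 * α * p.1 + γ * p.2 + β) • ContinuousLinearMap.fst ℝ ℝ ℝ +
       (γ * p.1 + 2 * δ * p.2 + ε) • ContinuousLinearMap.snd ℝ ℝ ℝ) p := by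
  have h1 : HasFDerivAt (fun q : ℝ × ℝ => q.1) (ContinuousLinearMap.fst ℝ ℝ ℝ) p :=
    hasFDerivAt_fst
  have h2 : HasFDerivAt (fun q : ℝ × ℝ => q.2) (ContinuousLinearMap.snd ℝ ℝ ℝ) p :=
    hasFDerivAt_snd
  have := ((((((h1.mul h1).const_mul α).add (h1.const_mul β)).add
      ((h1.mul h2).const_mul γ)).add ((h2.mul h2).const_mul δ)).add
      (h2.const_mul ε)).add_const ζ
  refine HasFDerivAt.congr_of_eventuallyEq (this.congr_fderiv ?_) (Filter.Eventually.of_forall fun q => ?_)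
  · refine ContinuousLinearMap.ext fun v => ?_
    simp
    ring
  · simp [quad]

lemma quad_contDiff (α β γ δ ε ζ : ℝ) : ContDiff ℝ (⊤ : ℕ∞) (quad α β γ δ ε ζ) := by
  unfold quad; fun_prop

lemma quad_diff (α β γ δ ε ζ : ℝ) (p : ℝ × ℝ) :
    DifferentiableAt ℝ (quad α β γ δ ε ζ) p :=
  (quad_hasFDerivAt α β γ δ ε ζ p).differentiableAt

lemma p1_quad (α β γ δ ε ζ : ℝ) : p1 (quad α β γ δ ε ζ) = quad 0 (2 * α) 0 0 γ β := by
  funext p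
  have := (quad_hasFDerivAt α β γ δ ε ζ p).fderiv
  simp only [p1, this]
  simp [quad]

lemma p2_quad (α β γ δ ε ζ : ℝ) : p2 (quad α β γ δ ε ζ) = quad 0 γ 0 0 (2 * δ) ε := by
  funext p
  have := (quad_hasFDerivAt α β γ δ ε ζ p).fderiv
  simp only [p2, this]
  simp [quad]

lemma p1_quad_apply (α β γ δ ε ζ : ℝ) (p : ℝ × ℝ) :
    p1 (quad α β γ δ ε ζ) p = 2 * α * p.1 + γ * p.2 + β := by
  rw [p1_quad]; simp [quad]

lemma p2_quad_apply (α β γ δ ε ζ : ℝ) (p : ℝ × ℝ) :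
    p2 (quad α β γ δ ε ζ) p = γ * p.1 + 2 * δ * p.2 + ε := by
  rw [p2_quad]; simp [quad]

lemma p11_quad (α β γ δ ε ζ : ℝ) (p : ℝ × ℝ) : p11 (quad α β γ δ ε ζ) p = 2 * α := by
  unfold p11; rw [p1_quad, p1_quad]; simp [quad]

lemma p12_quad (α β γ δ ε ζ : ℝ) (p : ℝ × ℝ) : p12 (quad α β γ δ ε ζ) p = γ := by
  unfold p12; rw [p2_quad, p1_quad]; simp [quad]

lemma p22_quad (α β γ δ ε ζ : ℝ) (p : ℝ × ℝ) : p22 (quad α β γ δ ε ζ) p = 2 * δ := by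
  unfold p22; rw [p2_quad, p2_quad]; simp [quad]

/-- A restricted 4-dimensional Walker metric is locally conformally flat (vanishing Weyl
tensor, expressed by the nine PDEs) iff `a, b, c` are the stated quadratic polynomials
whose coefficients satisfy the four algebraic relations. -/
theorem walker_locally_conformally_flat_iff (a b c : ℝ × ℝ → ℝ)
    (ha : ContDiff ℝ (⊤ : ℕ∞) a) (hb : ContDiff ℝ (⊤ : ℕ∞) b) (hc : ContDiff ℝ (⊤ : ℕ∞) c) :
    (∀ p : ℝ × ℝ,
      p12 c p = 0 ∧
      p11 b p = 0 ∧
      p22 a p = 0 ∧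
      p11 a p + p22 b p - p12 c p = 0 ∧
      -p12 b p + p11 c p = 0 ∧
      p12 a p - p22 c p = 0 ∧
      c p * p11 a p / 12 - a p * p12 b p / 4 - c p * p22 b p / 6
        + 5 * c p * p12 c p / 12 + b p * p22 c p / 4 = 0 ∧
      c p * p11 a p / 6 + b p * p12 a p / 4 - c p * p22 b p / 12
        - a p * p11 c p / 4 - 5 * c p * p12 c p / 12 = 0 ∧
      b p * p1 a p * p2 c p - c p * p1 a p * p2 b p + c p * p2 a p * p1 b p
        - b p * p2 a p * p1 c p - a p * p1 b p * p2 c p + a p * p2 b p * p1 c p = 0)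
    ↔
    ∃ E F G H I J K L M N P Q R : ℝ,
      (∀ p : ℝ × ℝ,
        a p = I / 2 * p.1 ^ 2 + J * p.1 + E * p.1 * p.2 + F * p.2 + K ∧
        b p = -(I / 2) * p.2 ^ 2 + L * p.2 + M * p.1 * p.2 + N * p.1 + R ∧
        c p = M / 2 * p.1 ^ 2 + P * p.1 + E / 2 * p.2 ^ 2 + G * p.2 + (Q + H)) ∧
      E * N - J * M + I * P = 0 ∧
      E * L - F * M + I * G = 0 ∧
      E * R - K * M + I * (H + Q) = 0 ∧
      K * (L * P - N * G) + R * (J * G - F * P) + (Q + H) * (F * N - J * L) = 0 := by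
  constructor
  · intro hW
    unfold p11 p12 p22 at hW
    have ea : p1 (p2 a) = p2 (p1 a) := funext (swap12 ha)
    have eb : p1 (p2 b) = p2 (p1 b) := funext (swap12 hb)
    have ec : p1 (p2 c) = p2 (p1 c) := funext (swap12 hc)
    have H1 : ∀ q, p1 (p2 c) q = 0 := fun q => (hW q).1
    have H2 : ∀ q, p1 (p1 b) q = 0 := fun q => (hW q).2.1
    have H3 : ∀ q, p2 (p2 a) q = 0 := fun q => (hW q).2.2.1
    have z_c12 : p1 (p2 c) = fun _ => (0:ℝ) := funext H1
    have z_b11 : p1 (p1 b) = fun _ => (0:ℝ) := funext H2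
    have z_a22 : p2 (p2 a) = fun _ => (0:ℝ) := funext H3
    have e4f : p1 (p1 a) = fun q => -(p2 (p2 b) q) := by
      funext q
      have h4 := (hW q).2.2.2.1
      have h1 := H1 q
      linarith
    have e5f : p1 (p1 c) = p1 (p2 b) := by
      funext q
      have h5 := (hW q).2.2.2.2.1
      linarith
    have e6f : p1 (p2 a) = p2 (p2 c) := funext fun q => by
      have h6 := (hW q).2.2.2.2.2.1
      linarith
    -- c₁₁₂ = 0
    have K1 : ∀ q, p2 (p1 (p1 c)) q = 0 := fun q => by
      rw [← swap12 (smooth_p1 hc) q]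
      have h : p2 (p1 c) = fun _ => (0:ℝ) := by rw [← ec]; exact z_c12
      rw [h]
      exact p1_zero q
    -- b₁₁₂-type: p1 (p1 (p2 b)) = 0
    have K2 : ∀ q, p1 (p1 (p2 b)) q = 0 := fun q => by
      rw [eb, swap12 (smooth_p1 hb) q, z_b11]
      exact p2_zero q
    -- constancy of b₁₂
    have Mconst : ∀ q, p1 (p2 b) q = p1 (p2 b) 0 :=
      const_of (smooth_p1 (smooth_p2 hb)) K2
        (fun q => by rw [← e5f]; exact K1 q)
    -- a₁₂ derivatives vanish
    have PA1 : ∀ q, p1 (p1 (p2 a)) q = 0 := fun q => by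
      rw [e6f, swap12 (smooth_p2 hc) q, z_c12]
      exact p2_zero q
    have PA2 : ∀ q, p2 (p1 (p2 a)) q = 0 := fun q => by
      rw [← swap12 (smooth_p2 ha) q, z_a22]
      exact p1_zero q
    have Econst : ∀ q, p1 (p2 a) q = p1 (p2 a) 0 :=
      const_of (smooth_p1 (smooth_p2 ha)) PA1 PA2
    -- a₁₁ derivatives vanish
    have A111 : ∀ q, p1 (p1 (p1 a)) q = 0 := fun q => by
      rw [e4f, p1_neg, swap12 (smooth_p2 hb) q, ← e5f, K1 q, neg_zero]
    have A112 : ∀ q, p2 (p1 (p1 a)) q = 0 := fun q => by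
      rw [← swap12 (smooth_p1 ha) q, ← ea]
      exact PA1 q
    have Iconst : ∀ q, p1 (p1 a) q = p1 (p1 a) 0 :=
      const_of (smooth_p1 (smooth_p1 ha)) A111 A112
    -- pointwise values of remaining second derivatives
    have vb22 : ∀ q, p2 (p2 b) q = -(p1 (p1 a) 0) := fun q => by
      have h := congrFun e4f q
      have h' := Iconst q
      linarith
    have vc11 : ∀ q, p1 (p1 c) q = p1 (p2 b) 0 := fun q =>
      (congrFun e5f q).trans (Mconst q)
    have vc22 : ∀ q, p2 (p2 c) q = p1 (p2 a) 0 := fun q =>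
      (congrFun e6f q).symm.trans (Econst q)
    -- the three quadratic models
    have haq : ∀ p, a p - quad (p1 (p1 a) 0 / 2) (p1 a 0) (p1 (p2 a) 0) 0 (p2 a 0) (a 0) p = 0 := by
      set g := quad (p1 (p1 a) 0 / 2) (p1 a 0) (p1 (p2 a) 0) 0 (p2 a 0) (a 0) with hg
      have hda : Differentiable ℝ a := ha.differentiable (by simp)
      have hda1 : Differentiable ℝ (p1 a) := (smooth_p1 ha).differentiable (by simp)
      have hda2 : Differentiable ℝ (p2 a) := (smooth_p2 ha).differentiable (by simp)
      have f1 : p1 (fun q => a q - g q) = fun q => p1 a q - p1 g q :=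
        funext fun q => p1_sub (hda q) (quad_diff _ _ _ _ _ _ q)
      have f2 : p2 (fun q => a q - g q) = fun q => p2 a q - p2 g q :=
        funext fun q => p2_sub (hda q) (quad_diff _ _ _ _ _ _ q)
      refine zero_of_derivs (ha.sub (quad_contDiff _ _ _ _ _ _)) ?_ ?_ ?_ ?_ ?_ ?_
      · intro q
        rw [f1, p1_sub (hda1 q) (by rw [hg, p1_quad]; exact quad_diff _ _ _ _ _ _ q),
          Iconst q, hg, p1_quad, p1_quad_apply]
        ring
      · intro q
        rw [f2, p1_sub (hda2 q) (by rw [hg, p2_quad]; exact quad_diff _ _ _ _ _ _ q),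
          Econst q, hg, p2_quad, p1_quad_apply]
        ring
      · intro q
        rw [f2, p2_sub (hda2 q) (by rw [hg, p2_quad]; exact quad_diff _ _ _ _ _ _ q),
          H3 q, hg, p2_quad, p2_quad_apply]
        ring
      · simp [hg, quad]
      · rw [f1]; beta_reduce; rw [p1_quad_apply]; simp
      · rw [f2]; beta_reduce; rw [p2_quad_apply]; simp
    have hbq : ∀ p, b p - quad 0 (p1 b 0) (p1 (p2 b) 0) (-(p1 (p1 a) 0 / 2)) (p2 b 0) (b 0) p = 0 := by
      set g := quad 0 (p1 b 0) (p1 (p2 b) 0) (-(p1 (p1 a) 0 / 2)) (p2 b 0) (b 0) with hg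
      have hdb : Differentiable ℝ b := hb.differentiable (by simp)
      have hdb1 : Differentiable ℝ (p1 b) := (smooth_p1 hb).differentiable (by simp)
      have hdb2 : Differentiable ℝ (p2 b) := (smooth_p2 hb).differentiable (by simp)
      have f1 : p1 (fun q => b q - g q) = fun q => p1 b q - p1 g q :=
        funext fun q => p1_sub (hdb q) (quad_diff _ _ _ _ _ _ q)
      have f2 : p2 (fun q => b q - g q) = fun q => p2 b q - p2 g q :=
        funext fun q => p2_sub (hdb q) (quad_diff _ _ _ _ _ _ q)
      refine zero_of_derivs (hb.sub (quad_contDiff _ _ _ _ _ _)) ?_ ?_ ?_ ?_ ?_ ?_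
      · intro q
        rw [f1, p1_sub (hdb1 q) (by rw [hg, p1_quad]; exact quad_diff _ _ _ _ _ _ q),
          H2 q, hg, p1_quad, p1_quad_apply]
        ring
      · intro q
        rw [f2, p1_sub (hdb2 q) (by rw [hg, p2_quad]; exact quad_diff _ _ _ _ _ _ q),
          Mconst q, hg, p2_quad, p1_quad_apply]
        ring
      · intro q
        rw [f2, p2_sub (hdb2 q) (by rw [hg, p2_quad]; exact quad_diff _ _ _ _ _ _ q),
          vb22 q, hg, p2_quad, p2_quad_apply]
        ring
      · simp [hg, quad]
      · rw [f1]; beta_reduce; rw [p1_quad_apply]; simp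
      · rw [f2]; beta_reduce; rw [p2_quad_apply]; simp
    have hcq : ∀ p, c p - quad (p1 (p2 b) 0 / 2) (p1 c 0) 0 (p1 (p2 a) 0 / 2) (p2 c 0) (c 0) p = 0 := by
      set g := quad (p1 (p2 b) 0 / 2) (p1 c 0) 0 (p1 (p2 a) 0 / 2) (p2 c 0) (c 0) with hg
      have hdc : Differentiable ℝ c := hc.differentiable (by simp)
      have hdc1 : Differentiable ℝ (p1 c) := (smooth_p1 hc).differentiable (by simp)
      have hdc2 : Differentiable ℝ (p2 c) := (smooth_p2 hc).differentiable (by simp)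
      have f1 : p1 (fun q => c q - g q) = fun q => p1 c q - p1 g q :=
        funext fun q => p1_sub (hdc q) (quad_diff _ _ _ _ _ _ q)
      have f2 : p2 (fun q => c q - g q) = fun q => p2 c q - p2 g q :=
        funext fun q => p2_sub (hdc q) (quad_diff _ _ _ _ _ _ q)
      refine zero_of_derivs (hc.sub (quad_contDiff _ _ _ _ _ _)) ?_ ?_ ?_ ?_ ?_ ?_
      · intro q
        rw [f1, p1_sub (hdc1 q) (by rw [hg, p1_quad]; exact quad_diff _ _ _ _ _ _ q),
          vc11 q, hg, p1_quad, p1_quad_apply]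
        ring
      · intro q
        rw [f2, p1_sub (hdc2 q) (by rw [hg, p2_quad]; exact quad_diff _ _ _ _ _ _ q),
          H1 q, hg, p2_quad, p1_quad_apply]
        ring
      · intro q
        rw [f2, p2_sub (hdc2 q) (by rw [hg, p2_quad]; exact quad_diff _ _ _ _ _ _ q),
          vc22 q, hg, p2_quad, p2_quad_apply]
        ring
      · simp [hg, quad]
      · rw [f1]; beta_reduce; rw [p1_quad_apply]; simp
      · rw [f2]; beta_reduce; rw [p2_quad_apply]; simp
    have hr3 : p1 (p2 a) 0 * b 0 - a 0 * p1 (p2 b) 0 + p1 (p1 a) 0 * (0 + c 0) = 0 := by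
      have e7 := (hW 0).2.2.2.2.2.2.1
      rw [vb22 0, H1 0, vc22 0] at e7
      linear_combination 4 * e7
    have hr1 : p1 (p2 a) 0 * p1 b 0 - p1 a 0 * p1 (p2 b) 0 + p1 (p1 a) 0 * p1 c 0 = 0 := by
      have e7 := (hW (1, 0)).2.2.2.2.2.2.1
      rw [Iconst (1, 0), Mconst (1, 0), vb22 (1, 0), H1 (1, 0), vc22 (1, 0)] at e7
      have ha1 := haq (1, 0); have hb1 := hbq (1, 0); have hc1 := hcq (1, 0)
      simp [quad] at ha1 hb1 hc1
      linear_combination 4 * e7 - p1 (p1 a) 0 * hc1 + p1 (p2 b) 0 * ha1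
        - p1 (p2 a) 0 * hb1 - hr3
    have hr2 : p1 (p2 a) 0 * p2 b 0 - p2 a 0 * p1 (p2 b) 0 + p1 (p1 a) 0 * p2 c 0 = 0 := by
      have e7 := (hW (0, 1)).2.2.2.2.2.2.1
      rw [Iconst (0, 1), Mconst (0, 1), vb22 (0, 1), H1 (0, 1), vc22 (0, 1)] at e7
      have ha1 := haq (0, 1); have hb1 := hbq (0, 1); have hc1 := hcq (0, 1)
      simp [quad] at ha1 hb1 hc1
      linear_combination 4 * e7 - p1 (p1 a) 0 * hc1 + p1 (p2 b) 0 * ha1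
        - p1 (p2 a) 0 * hb1 - hr3
    have hr4 : a 0 * (p2 b 0 * p1 c 0 - p1 b 0 * p2 c 0) + b 0 * (p1 a 0 * p2 c 0 - p2 a 0 * p1 c 0)
        + (c 0 + 0) * (p2 a 0 * p1 b 0 - p1 a 0 * p2 b 0) = 0 := by
      have e9 := (hW 0).2.2.2.2.2.2.2.2
      linear_combination e9
    refine ⟨p1 (p2 a) 0, p2 a 0, p2 c 0, 0, p1 (p1 a) 0, p1 a 0, a 0, p2 b 0, p1 (p2 b) 0,
      p1 b 0, p1 c 0, c 0, b 0, ?_, ?_, ?_, ?_, ?_⟩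
    · intro p
      have h1 := haq p; have h2 := hbq p; have h3 := hcq p
      simp only [quad] at h1 h2 h3
      exact ⟨by linear_combination h1, by linear_combination h2, by linear_combination h3⟩
    · linear_combination hr1
    · linear_combination hr2
    · linear_combination hr3
    · linear_combination hr4

  · rintro ⟨E, F, G, H, I, J, K, L, M, N, P, Q, R, hform, hr1, hr2, hr3, hr4⟩
    have haf : a = quad (I / 2) J E 0 F K := by
      funext p; rw [(hform p).1]; simp [quad]; ring
    have hbf : b = quad 0 N M (-(I / 2)) L R := by
      funext p; rw [(hform p).2.1]; simp [quad]; ring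
    have hcf : c = quad (M / 2) P 0 (E / 2) G (Q + H) := by
      funext p; rw [(hform p).2.2]; simp [quad]; ring
    intro p
    rw [haf, hbf, hcf]
    simp only [p11_quad, p12_quad, p22_quad, p1_quad_apply, p2_quad_apply]
    refine ⟨by first | trivial | ring, by first | trivial | ring, by first | trivial | ring, by first | trivial | ring, by first | trivial | ring, by first | trivial | ring, ?_, ?_, ?_⟩
    · simp only [quad]
      linear_combination (p.1 * hr1 + p.2 * hr2 + hr3) / 4
    · simp only [quad]
      linear_combination (p.1 * hr1 + p.2 * hr2 + hr3) / 4
    · simp only [quad]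
      linear_combination
        ((Q+H) * p.1 - K * p.2 + G * (p.1 * p.2) - L/2 * p.1^2 - F/2 * p.2^2
          + E/2 * (p.1 * p.2^2) + I/2 * (p.1^2 * p.2) - M/2 * p.1^3) * hr1 +
        (R * p.1 - (Q+H) * p.2 - P * (p.1 * p.2) + N/2 * p.1^2 + J/2 * p.2^2
          + I/2 * (p.1 * p.2^2) - M/2 * (p.1^2 * p.2) + E/2 * p.2^3) * hr2 +
        ((G + J) * p.2 - (L + P) * p.1 + I * (p.1 * p.2) - M * p.1^2 + E * p.2^2) * hr3 +
        hr4
end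

section
/- Let ā, â, b̄, b̂, c̄, ĉ : ℝ → ℝ be smooth functions and define a(u₁,u₂) = u₂·ā(u₁) + â(u₁), b(u₁,u₂) = u₁·b̄(u₂) + b̂(u₂), c(u₁,u₂) = c̄(u₁) + ĉ(u₂). Then the three equations a₁₁ + b₂₂ = 0, b₁₂ − c₁₁ = 0, and a₁₂ − c₂₂ = 0 hold at every point of ℝ² if and only if there exist real constants E, F, G, H, I, J, K, L, M, N, P, Q, R such that for all (u₁,u₂): a(u₁,u₂) = u₂(E·u₁ + F) + (I/2)u₁² + J·u₁ + K, b(u₁,u₂) = u₁(M·u₂ + N) − (I/2)u₂² + L·u₂ + R, and c(u₁,u₂) = (M/2)u₁² + P·u₁ + Q + (E/2)u₂² + G·u₂ + H. -/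
open ContinuousLinearMap

lemma sep_hasF (g h k m : ℝ → ℝ) (p : ℝ × ℝ)
    (hg : DifferentiableAt ℝ g p.1) (hh : DifferentiableAt ℝ h p.1)
    (hk : DifferentiableAt ℝ k p.2) (hm : DifferentiableAt ℝ m p.2) :
    HasFDerivAt (fun q : ℝ × ℝ => q.2 * g q.1 + q.1 * k q.2 + h q.1 + m q.2)
      ((Prod.snd p • (deriv g p.1 • fst ℝ ℝ ℝ) + (g p.1) • snd ℝ ℝ ℝ
        + (Prod.fst p • (deriv k p.2 • snd ℝ ℝ ℝ) + (k p.2) • fst ℝ ℝ ℝ))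
        + deriv h p.1 • fst ℝ ℝ ℝ + deriv m p.2 • snd ℝ ℝ ℝ) p := by
  have Hg : HasFDerivAt (fun q : ℝ × ℝ => g q.1) (deriv g p.1 • fst ℝ ℝ ℝ) p :=
    hg.hasDerivAt.comp_hasFDerivAt p (hasFDerivAt_fst)
  have Hh : HasFDerivAt (fun q : ℝ × ℝ => h q.1) (deriv h p.1 • fst ℝ ℝ ℝ) p :=
    hh.hasDerivAt.comp_hasFDerivAt p (hasFDerivAt_fst)
  have Hk : HasFDerivAt (fun q : ℝ × ℝ => k q.2) (deriv k p.2 • snd ℝ ℝ ℝ) p :=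
    hk.hasDerivAt.comp_hasFDerivAt p (hasFDerivAt_snd)
  have Hm : HasFDerivAt (fun q : ℝ × ℝ => m q.2) (deriv m p.2 • snd ℝ ℝ ℝ) p :=
    hm.hasDerivAt.comp_hasFDerivAt p (hasFDerivAt_snd)
  exact (((hasFDerivAt_snd.mul Hg).add (hasFDerivAt_fst.mul Hk)).add Hh).add Hm

lemma sep_p1v (g h k m : ℝ → ℝ) (p : ℝ × ℝ)
    (hg : DifferentiableAt ℝ g p.1) (hh : DifferentiableAt ℝ h p.1)
    (hk : DifferentiableAt ℝ k p.2) (hm : DifferentiableAt ℝ m p.2) :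
    p1 (fun q : ℝ × ℝ => q.2 * g q.1 + q.1 * k q.2 + h q.1 + m q.2) p
      = p.2 * deriv g p.1 + k p.2 + deriv h p.1 := by
  rw [p1, (sep_hasF g h k m p hg hh hk hm).fderiv]
  simp
  try ring

lemma sep_p2v (g h k m : ℝ → ℝ) (p : ℝ × ℝ)
    (hg : DifferentiableAt ℝ g p.1) (hh : DifferentiableAt ℝ h p.1)
    (hk : DifferentiableAt ℝ k p.2) (hm : DifferentiableAt ℝ m p.2) :
    p2 (fun q : ℝ × ℝ => q.2 * g q.1 + q.1 * k q.2 + h q.1 + m q.2) p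
      = g p.1 + p.1 * deriv k p.2 + deriv m p.2 := by
  rw [p2, (sep_hasF g h k m p hg hh hk hm).fderiv]
  simp
  try ring

lemma sep_p11v (g h k m : ℝ → ℝ)
    (dg : Differentiable ℝ g) (dh : Differentiable ℝ h)
    (dk : Differentiable ℝ k) (dm : Differentiable ℝ m)
    (dg' : Differentiable ℝ (deriv g)) (dh' : Differentiable ℝ (deriv h)) (p : ℝ × ℝ) :
    p11 (fun q : ℝ × ℝ => q.2 * g q.1 + q.1 * k q.2 + h q.1 + m q.2) p
      = p.2 * deriv (deriv g) p.1 + deriv (deriv h) p.1 := by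
  rw [p11]
  have e : p1 (fun q : ℝ × ℝ => q.2 * g q.1 + q.1 * k q.2 + h q.1 + m q.2)
      = fun q : ℝ × ℝ => q.2 * deriv g q.1 + q.1 * (fun _ : ℝ => (0:ℝ)) q.2
          + deriv h q.1 + k q.2 := by
    funext q
    rw [sep_p1v g h k m q (dg q.1) (dh q.1) (dk q.2) (dm q.2)]
    ring
  rw [e, sep_p1v (deriv g) (deriv h) (fun _ : ℝ => (0:ℝ)) k p (dg' p.1) (dh' p.1)
    (differentiableAt_const 0) (dk p.2)]
  ring

lemma sep_p12v (g h k m : ℝ → ℝ)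
    (dg : Differentiable ℝ g) (dh : Differentiable ℝ h)
    (dk : Differentiable ℝ k) (dm : Differentiable ℝ m)
    (dk' : Differentiable ℝ (deriv k)) (dm' : Differentiable ℝ (deriv m)) (p : ℝ × ℝ) :
    p12 (fun q : ℝ × ℝ => q.2 * g q.1 + q.1 * k q.2 + h q.1 + m q.2) p
      = deriv g p.1 + deriv k p.2 := by
  rw [p12]
  have e : p2 (fun q : ℝ × ℝ => q.2 * g q.1 + q.1 * k q.2 + h q.1 + m q.2)
      = fun q : ℝ × ℝ => q.2 * (fun _ : ℝ => (0:ℝ)) q.1 + q.1 * deriv k q.2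
          + g q.1 + deriv m q.2 := by
    funext q
    rw [sep_p2v g h k m q (dg q.1) (dh q.1) (dk q.2) (dm q.2)]
    ring
  rw [e, sep_p1v (fun _ : ℝ => (0:ℝ)) g (deriv k) (deriv m) p
    (differentiableAt_const 0) (dg p.1) (dk' p.2) (dm' p.2)]
  simp
  try ring

lemma sep_p22v (g h k m : ℝ → ℝ)
    (dg : Differentiable ℝ g) (dh : Differentiable ℝ h)
    (dk : Differentiable ℝ k) (dm : Differentiable ℝ m)
    (dk' : Differentiable ℝ (deriv k)) (dm' : Differentiable ℝ (deriv m)) (p : ℝ × ℝ) :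
    p22 (fun q : ℝ × ℝ => q.2 * g q.1 + q.1 * k q.2 + h q.1 + m q.2) p
      = p.1 * deriv (deriv k) p.2 + deriv (deriv m) p.2 := by
  rw [p22]
  have e : p2 (fun q : ℝ × ℝ => q.2 * g q.1 + q.1 * k q.2 + h q.1 + m q.2)
      = fun q : ℝ × ℝ => q.2 * (fun _ : ℝ => (0:ℝ)) q.1 + q.1 * deriv k q.2
          + g q.1 + deriv m q.2 := by
    funext q
    rw [sep_p2v g h k m q (dg q.1) (dh q.1) (dk q.2) (dm q.2)]
    ring
  rw [e, sep_p2v (fun _ : ℝ => (0:ℝ)) g (deriv k) (deriv m) p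
    (differentiableAt_const 0) (dg p.1) (dk' p.2) (dm' p.2)]
  simp
  try ring

lemma hasDerivAt_quad (c2 c1 c0 u : ℝ) :
    HasDerivAt (fun u : ℝ => c2 * u ^ 2 + c1 * u + c0) (2 * c2 * u + c1) u := by
  have h : HasDerivAt (fun u : ℝ => c2 * u ^ 2 + c1 * u + c0) (c2 * (((2:ℕ):ℝ) * u ^ (2 - 1)) + c1 * 1) u :=
    (((hasDerivAt_pow 2 u).const_mul c2).add ((hasDerivAt_id u).const_mul c1)).add_const c0
  convert h using 1
  push_cast; ring

lemma diff_quad (c2 c1 c0 : ℝ) : Differentiable ℝ (fun u : ℝ => c2 * u ^ 2 + c1 * u + c0) :=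
  fun u => (hasDerivAt_quad c2 c1 c0 u).differentiableAt

lemma deriv_quad (c2 c1 c0 : ℝ) :
    deriv (fun u : ℝ => c2 * u ^ 2 + c1 * u + c0) = fun u => 2 * c2 * u + c1 :=
  funext fun u => (hasDerivAt_quad c2 c1 c0 u).deriv

lemma deriv2_quad (c2 c1 c0 : ℝ) :
    deriv (deriv (fun u : ℝ => c2 * u ^ 2 + c1 * u + c0)) = fun _ => 2 * c2 := by
  rw [deriv_quad]
  have e : (fun u : ℝ => 2 * c2 * u + c1) = fun u : ℝ => (0:ℝ) * u ^ 2 + (2*c2) * u + c1 := by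
    funext u; ring
  rw [e, deriv_quad]
  funext u; ring

lemma diff_deriv_quad (c2 c1 c0 : ℝ) :
    Differentiable ℝ (deriv (fun u : ℝ => c2 * u ^ 2 + c1 * u + c0)) := by
  rw [deriv_quad]
  have e : (fun u : ℝ => 2 * c2 * u + c1) = fun u : ℝ => (0:ℝ) * u ^ 2 + (2*c2) * u + c1 := by
    funext u; ring
  rw [e]; exact diff_quad _ _ _

lemma const_linear (f : ℝ → ℝ) (hf : Differentiable ℝ f) (c : ℝ)
    (h : ∀ x, deriv f x = c) (x : ℝ) : f x = c * x + f 0 := by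
  have hz : ∀ y, deriv (fun y : ℝ => f y - c * y) y = 0 := by
    intro y
    have h1 : HasDerivAt (fun y : ℝ => f y - c * y) (deriv f y - c * 1) y :=
      ((hf y).hasDerivAt).sub ((hasDerivAt_id y).const_mul c)
    rw [h1.deriv, h y]; ring
  have hd : Differentiable ℝ (fun y : ℝ => f y - c * y) := by
    intro y
    exact (((hf y).hasDerivAt).sub ((hasDerivAt_id y).const_mul c)).differentiableAt
  have := is_const_of_deriv_eq_zero hd hz x 0
  simp at this
  linarith

lemma const_quad (f : ℝ → ℝ) (hf : Differentiable ℝ f) (hf' : Differentiable ℝ (deriv f))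
    (c : ℝ) (h : ∀ x, deriv (deriv f) x = c) (x : ℝ) :
    f x = c / 2 * x ^ 2 + deriv f 0 * x + f 0 := by
  have h1 : ∀ y, deriv f y = c * y + deriv f 0 := const_linear (deriv f) hf' c h
  have hz : ∀ y, deriv (fun y : ℝ => f y - (c/2 * y ^ 2 + deriv f 0 * y + 0)) y = 0 := by
    intro y
    have h2 : HasDerivAt (fun y : ℝ => f y - (c/2 * y ^ 2 + deriv f 0 * y + 0))
        (deriv f y - (2 * (c/2) * y + deriv f 0)) y :=
      ((hf y).hasDerivAt).sub (hasDerivAt_quad (c/2) (deriv f 0) 0 y)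
    rw [h2.deriv, h1 y]; ring
  have hd : Differentiable ℝ (fun y : ℝ => f y - (c/2 * y ^ 2 + deriv f 0 * y + 0)) :=
    hf.sub (diff_quad _ _ _)
  have := is_const_of_deriv_eq_zero hd hz x 0
  simp at this
  nlinarith [this]

lemma deriv_eq_zero_of_const (f : ℝ → ℝ) (c : ℝ) (h : ∀ x, f x = c) :
    ∀ x, deriv f x = 0 := by
  have e : f = fun _ => c := funext h
  intro x; rw [e]; simp

/-- Step 2 of the locally conformally flat characterization: for functions of the
separated form produced by Step 1, the equations `a₁₁ + b₂₂ = 0`, `b₁₂ - c₁₁ = 0`,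
`a₁₂ - c₂₂ = 0` hold iff `a, b, c` are the stated quadratic polynomials. -/
theorem walker_lcf_step2 (abar ahat bbar bhat cbar chat : ℝ → ℝ)
    (h1 : ContDiff ℝ (⊤ : ℕ∞) abar) (h2 : ContDiff ℝ (⊤ : ℕ∞) ahat) (h3 : ContDiff ℝ (⊤ : ℕ∞) bbar)
    (h4 : ContDiff ℝ (⊤ : ℕ∞) bhat) (h5 : ContDiff ℝ (⊤ : ℕ∞) cbar) (h6 : ContDiff ℝ (⊤ : ℕ∞) chat)
    (a b c : ℝ × ℝ → ℝ)
    (hadef : ∀ p : ℝ × ℝ, a p = p.2 * abar p.1 + ahat p.1)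
    (hbdef : ∀ p : ℝ × ℝ, b p = p.1 * bbar p.2 + bhat p.2)
    (hcdef : ∀ p : ℝ × ℝ, c p = cbar p.1 + chat p.2) :
    (∀ p : ℝ × ℝ,
      p11 a p + p22 b p = 0 ∧
      p12 b p - p11 c p = 0 ∧
      p12 a p - p22 c p = 0)
    ↔
    ∃ E F G H I J K L M N P Q R : ℝ, ∀ p : ℝ × ℝ,
      a p = p.2 * (E * p.1 + F) + I / 2 * p.1 ^ 2 + J * p.1 + K ∧
      b p = p.1 * (M * p.2 + N) - I / 2 * p.2 ^ 2 + L * p.2 + R ∧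
      c p = M / 2 * p.1 ^ 2 + P * p.1 + Q + E / 2 * p.2 ^ 2 + G * p.2 + H := by
  have dz : Differentiable ℝ (fun _ : ℝ => (0:ℝ)) := differentiable_const 0
  have hz1 : deriv (fun _ : ℝ => (0:ℝ)) = fun _ : ℝ => (0:ℝ) := funext fun x => deriv_const x 0
  have dz' : Differentiable ℝ (deriv (fun _ : ℝ => (0:ℝ))) := by rw [hz1]; exact dz
  constructor
  · intro Hyp
    have ia := contDiff_infty_iff_deriv.mp (h1.of_le (by simp))
    have ia2 := contDiff_infty_iff_deriv.mp ia.2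
    have ib := contDiff_infty_iff_deriv.mp (h2.of_le (by simp))
    have ib2 := contDiff_infty_iff_deriv.mp ib.2
    have ic := contDiff_infty_iff_deriv.mp (h3.of_le (by simp))
    have ic2 := contDiff_infty_iff_deriv.mp ic.2
    have id_ := contDiff_infty_iff_deriv.mp (h4.of_le (by simp))
    have id2 := contDiff_infty_iff_deriv.mp id_.2
    have ie := contDiff_infty_iff_deriv.mp (h5.of_le (by simp))
    have ie2 := contDiff_infty_iff_deriv.mp ie.2
    have if_ := contDiff_infty_iff_deriv.mp (h6.of_le (by simp))
    have if2 := contDiff_infty_iff_deriv.mp if_.2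
    have da : Differentiable ℝ abar := ia.1
    have da' : Differentiable ℝ (deriv abar) := ia2.1
    have dah : Differentiable ℝ ahat := ib.1
    have dah' : Differentiable ℝ (deriv ahat) := ib2.1
    have db : Differentiable ℝ bbar := ic.1
    have db' : Differentiable ℝ (deriv bbar) := ic2.1
    have dbh : Differentiable ℝ bhat := id_.1
    have dbh' : Differentiable ℝ (deriv bhat) := id2.1
    have dc : Differentiable ℝ cbar := ie.1
    have dc' : Differentiable ℝ (deriv cbar) := ie2.1
    have dch : Differentiable ℝ chat := if_.1
    have dch' : Differentiable ℝ (deriv chat) := if2.1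
    have ea : a = fun q : ℝ × ℝ => q.2 * abar q.1 + q.1 * (fun _ : ℝ => (0:ℝ)) q.2
        + ahat q.1 + (fun _ : ℝ => (0:ℝ)) q.2 := by
      funext q
      show a q = q.2 * abar q.1 + q.1 * 0 + ahat q.1 + 0
      rw [hadef q]; ring
    have eb : b = fun q : ℝ × ℝ => q.2 * (fun _ : ℝ => (0:ℝ)) q.1 + q.1 * bbar q.2
        + (fun _ : ℝ => (0:ℝ)) q.1 + bhat q.2 := by
      funext q
      show b q = q.2 * 0 + q.1 * bbar q.2 + 0 + bhat q.2
      rw [hbdef q]; ring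
    have ec : c = fun q : ℝ × ℝ => q.2 * (fun _ : ℝ => (0:ℝ)) q.1 + q.1 * (fun _ : ℝ => (0:ℝ)) q.2
        + cbar q.1 + chat q.2 := by
      funext q
      show c q = q.2 * 0 + q.1 * 0 + cbar q.1 + chat q.2
      rw [hcdef q]; ring
    have E1 : ∀ u v : ℝ, v * deriv (deriv abar) u + deriv (deriv ahat) u
        + (u * deriv (deriv bbar) v + deriv (deriv bhat) v) = 0 := by
      intro u v
      have hh := (Hyp (u, v)).1
      rw [ea, eb] at hh
      rw [sep_p11v abar ahat (fun _ : ℝ => (0:ℝ)) (fun _ : ℝ => (0:ℝ)) da dah dz dz da' dah' (u, v)] at hh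
      rw [sep_p22v (fun _ : ℝ => (0:ℝ)) (fun _ : ℝ => (0:ℝ)) bbar bhat dz dz db dbh db' dbh' (u, v)] at hh
      simp only [hz1] at hh
      try simp at hh
      linarith [hh]
    have E2 : ∀ u v : ℝ, deriv bbar v = deriv (deriv cbar) u := by
      intro u v
      have hh := (Hyp (u, v)).2.1
      rw [eb, ec] at hh
      rw [sep_p12v (fun _ : ℝ => (0:ℝ)) (fun _ : ℝ => (0:ℝ)) bbar bhat dz dz db dbh db' dbh' (u, v)] at hh
      rw [sep_p11v (fun _ : ℝ => (0:ℝ)) cbar (fun _ : ℝ => (0:ℝ)) chat dz dc dz dch dz' dc' (u, v)] at hh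
      simp only [hz1] at hh
      try simp at hh
      linarith [hh]
    have E3 : ∀ u v : ℝ, deriv abar u = deriv (deriv chat) v := by
      intro u v
      have hh := (Hyp (u, v)).2.2
      rw [ea, ec] at hh
      rw [sep_p12v abar ahat (fun _ : ℝ => (0:ℝ)) (fun _ : ℝ => (0:ℝ)) da dah dz dz dz' dz' (u, v)] at hh
      rw [sep_p22v (fun _ : ℝ => (0:ℝ)) cbar (fun _ : ℝ => (0:ℝ)) chat dz dc dz dch dz' dch' (u, v)] at hh
      simp only [hz1] at hh
      try simp at hh
      linarith [hh]
    have hE : ∀ u : ℝ, deriv abar u = deriv abar 0 := fun u => (E3 u 0).trans (E3 0 0).symm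
    have hChat : ∀ v : ℝ, deriv (deriv chat) v = deriv abar 0 := fun v => (E3 0 v).symm
    have hM : ∀ v : ℝ, deriv bbar v = deriv bbar 0 := fun v => (E2 0 v).trans (E2 0 0).symm
    have hCbar : ∀ u : ℝ, deriv (deriv cbar) u = deriv bbar 0 := fun u => (E2 u 0).symm
    have ha2 : ∀ u, deriv (deriv abar) u = 0 := deriv_eq_zero_of_const _ _ hE
    have hb2 : ∀ v, deriv (deriv bbar) v = 0 := deriv_eq_zero_of_const _ _ hM
    have E1' : ∀ u v : ℝ, deriv (deriv ahat) u + deriv (deriv bhat) v = 0 := by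
      intro u v
      have := E1 u v
      rw [ha2 u, hb2 v] at this
      linarith
    have hI : ∀ u : ℝ, deriv (deriv ahat) u = deriv (deriv ahat) 0 := by
      intro u
      have t1 := E1' u 0
      have t2 := E1' 0 0
      linarith
    have hBh : ∀ v : ℝ, deriv (deriv bhat) v = -(deriv (deriv ahat) 0) := by
      intro v
      have := E1' 0 v
      linarith
    have fabar : ∀ u : ℝ, abar u = deriv abar 0 * u + abar 0 := const_linear abar da _ hE
    have fahat : ∀ u : ℝ, ahat u = deriv (deriv ahat) 0 / 2 * u ^ 2 + deriv ahat 0 * u + ahat 0 :=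
      const_quad ahat dah dah' _ hI
    have fbbar : ∀ v : ℝ, bbar v = deriv bbar 0 * v + bbar 0 := const_linear bbar db _ hM
    have fbhat : ∀ v : ℝ, bhat v = -(deriv (deriv ahat) 0) / 2 * v ^ 2 + deriv bhat 0 * v + bhat 0 :=
      const_quad bhat dbh dbh' _ hBh
    have fcbar : ∀ u : ℝ, cbar u = deriv bbar 0 / 2 * u ^ 2 + deriv cbar 0 * u + cbar 0 :=
      const_quad cbar dc dc' _ hCbar
    have fchat : ∀ v : ℝ, chat v = deriv abar 0 / 2 * v ^ 2 + deriv chat 0 * v + chat 0 :=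
      const_quad chat dch dch' _ hChat
    refine ⟨deriv abar 0, abar 0, deriv chat 0, chat 0, deriv (deriv ahat) 0, deriv ahat 0,
      ahat 0, deriv bhat 0, deriv bbar 0, bbar 0, deriv cbar 0, cbar 0, bhat 0,
      fun p => ⟨?_, ?_, ?_⟩⟩
    · rw [hadef p, fabar p.1, fahat p.1]; ring
    · rw [hbdef p, fbbar p.2, fbhat p.2]; ring
    · rw [hcdef p, fcbar p.1, fchat p.2]; ring
  · rintro ⟨E, F, G, H', I, J, K, L, M, N, P, Q, R, hp⟩
    have ea : a = fun q : ℝ × ℝ => q.2 * (fun u : ℝ => (0:ℝ) * u ^ 2 + E * u + F) q.1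
        + q.1 * (fun _ : ℝ => (0:ℝ)) q.2
        + (fun u : ℝ => I / 2 * u ^ 2 + J * u + K) q.1 + (fun _ : ℝ => (0:ℝ)) q.2 := by
      funext q
      show a q = q.2 * ((0:ℝ) * q.1 ^ 2 + E * q.1 + F) + q.1 * 0
        + (I / 2 * q.1 ^ 2 + J * q.1 + K) + 0
      rw [(hp q).1]; ring
    have eb : b = fun q : ℝ × ℝ => q.2 * (fun _ : ℝ => (0:ℝ)) q.1
        + q.1 * (fun v : ℝ => (0:ℝ) * v ^ 2 + M * v + N) q.2
        + (fun _ : ℝ => (0:ℝ)) q.1 + (fun v : ℝ => -(I / 2) * v ^ 2 + L * v + R) q.2 := by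
      funext q
      show b q = q.2 * 0 + q.1 * ((0:ℝ) * q.2 ^ 2 + M * q.2 + N) + 0
        + (-(I / 2) * q.2 ^ 2 + L * q.2 + R)
      rw [(hp q).2.1]; ring
    have ec : c = fun q : ℝ × ℝ => q.2 * (fun _ : ℝ => (0:ℝ)) q.1
        + q.1 * (fun _ : ℝ => (0:ℝ)) q.2
        + (fun u : ℝ => M / 2 * u ^ 2 + P * u + Q) q.1
        + (fun v : ℝ => E / 2 * v ^ 2 + G * v + H') q.2 := by
      funext q
      show c q = q.2 * 0 + q.1 * 0 + (M / 2 * q.1 ^ 2 + P * q.1 + Q)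
        + (E / 2 * q.2 ^ 2 + G * q.2 + H')
      rw [(hp q).2.2]; ring
    intro p
    refine ⟨?_, ?_, ?_⟩
    · rw [ea, eb]
      rw [sep_p11v (fun u : ℝ => (0:ℝ) * u ^ 2 + E * u + F)
        (fun u : ℝ => I / 2 * u ^ 2 + J * u + K) (fun _ : ℝ => (0:ℝ)) (fun _ : ℝ => (0:ℝ))
        (diff_quad _ _ _) (diff_quad _ _ _) dz dz (diff_deriv_quad _ _ _) (diff_deriv_quad _ _ _) p]
      rw [sep_p22v (fun _ : ℝ => (0:ℝ)) (fun _ : ℝ => (0:ℝ))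
        (fun v : ℝ => (0:ℝ) * v ^ 2 + M * v + N) (fun v : ℝ => -(I / 2) * v ^ 2 + L * v + R)
        dz dz (diff_quad _ _ _) (diff_quad _ _ _) (diff_deriv_quad _ _ _) (diff_deriv_quad _ _ _) p]
      simp only [deriv2_quad]
      ring
    · rw [eb, ec]
      rw [sep_p12v (fun _ : ℝ => (0:ℝ)) (fun _ : ℝ => (0:ℝ))
        (fun v : ℝ => (0:ℝ) * v ^ 2 + M * v + N) (fun v : ℝ => -(I / 2) * v ^ 2 + L * v + R)
        dz dz (diff_quad _ _ _) (diff_quad _ _ _) (diff_deriv_quad _ _ _) (diff_deriv_quad _ _ _) p]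
      rw [sep_p11v (fun _ : ℝ => (0:ℝ)) (fun u : ℝ => M / 2 * u ^ 2 + P * u + Q)
        (fun _ : ℝ => (0:ℝ)) (fun v : ℝ => E / 2 * v ^ 2 + G * v + H')
        dz (diff_quad _ _ _) dz (diff_quad _ _ _) dz' (diff_deriv_quad _ _ _) p]
      simp only [deriv2_quad]
      simp only [deriv_quad, hz1]
      ring
    · rw [ea, ec]
      rw [sep_p12v (fun u : ℝ => (0:ℝ) * u ^ 2 + E * u + F)
        (fun u : ℝ => I / 2 * u ^ 2 + J * u + K) (fun _ : ℝ => (0:ℝ)) (fun _ : ℝ => (0:ℝ))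
        (diff_quad _ _ _) (diff_quad _ _ _) dz dz dz' dz' p]
      rw [sep_p22v (fun _ : ℝ => (0:ℝ)) (fun u : ℝ => M / 2 * u ^ 2 + P * u + Q)
        (fun _ : ℝ => (0:ℝ)) (fun v : ℝ => E / 2 * v ^ 2 + G * v + H')
        dz (diff_quad _ _ _) dz (diff_quad _ _ _) dz' (diff_deriv_quad _ _ _) p]
      simp only [deriv2_quad]
      simp only [deriv_quad, hz1]
      ring
end

section
/- Let E, F, G, H, I, J, K, L, M, N, P, Q, R be real constants and define a(u₁,u₂) = (I/2)u₁² + J·u₁ + E·u₁u₂ + F·u₂ + K, b(u₁,u₂) = −(I/2)u₂² + L·u₂ + M·u₁u₂ + N·u₁ + R, c(u₁,u₂) = (M/2)u₁² + P·u₁ + (E/2)u₂² + G·u₂ + (Q+H). Then the three identities (for all (u₁,u₂) ∈ ℝ²): c·a₁₁/12 − a·b₁₂/4 − c·b₂₂/6 + b·c₂₂/4 = 0, c·a₁₁/6 + b·a₁₂/4 − c·b₂₂/12 − a·c₁₁/4 = 0, and b·a₁c₂ − c·a₁b₂ + c·a₂b₁ − b·a₂c₁ − a·b₁c₂ + a·b₂c₁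 = 0 hold if and only if E·N − J·M + I·P = 0, E·L − F·M + I·G = 0, E·R − K·M + I·(H+Q) = 0, and K·(L·P − N·G) + R·(J·G − F·P) + (Q+H)·(F·N − J·L) = 0. -/
def quadratic (α β γ δ ε ζ : ℝ) (p : ℝ × ℝ) : ℝ :=
  α * p.1 ^ 2 + β * p.1 * p.2 + γ * p.2 ^ 2 + δ * p.1 + ε * p.2 + ζ

open ContinuousLinearMap in
theorem hasFDerivAt_quadratic (α β γ δ ε ζ : ℝ) (p : ℝ × ℝ) :
    HasFDerivAt (quadratic α β γ δ ε ζ)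
      ((2 * α * p.1 + β * p.2 + δ) • fst ℝ ℝ ℝ + (β * p.1 + 2 * γ * p.2 + ε) • snd ℝ ℝ ℝ) p := by
  have h₁ : HasFDerivAt (fun q : ℝ × ℝ => q.1) (fst ℝ ℝ ℝ) p := hasFDerivAt_fst
  have h₂ : HasFDerivAt (fun q : ℝ × ℝ => q.2) (snd ℝ ℝ ℝ) p := hasFDerivAt_snd
  refine HasFDerivAt.congr_fderiv (f := quadratic α β γ δ ε ζ)
    (((((((h₁.pow 2).const_mul α).add ((h₁.const_mul β).mul h₂)).add
      ((h₂.pow 2).const_mul γ)).add (h₁.const_mul δ)).add (h₂.const_mul ε)).add_const ζ) ?_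
  refine ContinuousLinearMap.ext fun v => ?_
  simp only [add_apply, smul_apply, coe_fst', coe_snd', smul_eq_mul, nsmul_eq_mul]
  ring

theorem differentiable_quadratic (α β γ δ ε ζ : ℝ) : Differentiable ℝ (quadratic α β γ δ ε ζ) :=
  fun p => (hasFDerivAt_quadratic α β γ δ ε ζ p).differentiableAt

theorem p1_quadratic (α β γ δ ε ζ : ℝ) :
    p1 (quadratic α β γ δ ε ζ) = quadratic 0 0 0 (2 * α) β δ := by
  funext p
  simp [p1, (hasFDerivAt_quadratic α β γ δ ε ζ p).fderiv, quadratic]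

theorem p2_quadratic (α β γ δ ε ζ : ℝ) :
    p2 (quadratic α β γ δ ε ζ) = quadratic 0 0 0 β (2 * γ) ε := by
  funext p
  simp [p2, (hasFDerivAt_quadratic α β γ δ ε ζ p).fderiv, quadratic]

theorem forall_affine_eq_zero_iff {R : Type*} [Semiring R] {α β γ : R} :
    (∀ p : R × R, α * p.1 + β * p.2 + γ = 0) ↔ α = 0 ∧ β = 0 ∧ γ = 0 := by
  refine ⟨fun h => ?_, by rintro ⟨rfl, rfl, rfl⟩ p; simp⟩
  have hγ : γ = 0 := by simpa using h 0
  exact ⟨by simpa [hγ] using h (1, 0), by simpa [hγ] using h (0, 1), hγ⟩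

theorem det_fin_three_eq_zero_of_linear_relation {R : Type*} [CommRing R] [IsDomain R]
    {a b c a₁ b₁ c₁ a₂ b₂ c₂ x y z : R} (hxyz : ![x, y, z] ≠ 0)
    (h₀ : a * x + b * y + c * z = 0) (h₁ : a₁ * x + b₁ * y + c₁ * z = 0)
    (h₂ : a₂ * x + b₂ * y + c₂ * z = 0) :
    !![a, b, c; a₁, b₁, c₁; a₂, b₂, c₂].det = 0 := by
  refine Matrix.exists_mulVec_eq_zero_iff.mp ⟨![x, y, z], hxyz, ?_⟩
  ext i
  fin_cases i <;> simp [Matrix.mulVec, dotProduct, Fin.sum_univ_three, h₀, h₁, h₂]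

noncomputable def wronskian (a b c : ℝ × ℝ → ℝ) (p : ℝ × ℝ) : Matrix (Fin 3) (Fin 3) ℝ :=
  !![a p, b p, c p; p1 a p, p1 b p, p1 c p; p2 a p, p2 b p, p2 c p]

theorem det_wronskian (a b c : ℝ × ℝ → ℝ) (p : ℝ × ℝ) :
    (wronskian a b c p).det = a p * p1 b p * p2 c p - a p * p1 c p * p2 b p
      - b p * p1 a p * p2 c p + b p * p1 c p * p2 a p + c p * p1 a p * p2 b p
      - c p * p1 b p * p2 a p :=
  Matrix.det_fin_three _

theorem neg_det_wronskian (a b c : ℝ × ℝ → ℝ) (p : ℝ × ℝ) :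
    -(wronskian a b c p).det = b p * p1 a p * p2 c p - c p * p1 a p * p2 b p
      + c p * p2 a p * p1 b p - b p * p2 a p * p1 c p - a p * p1 b p * p2 c p
      + a p * p2 b p * p1 c p := by
  rw [det_wronskian]; ring

theorem det_wronskian_eq_zero_of_linear_relation {a b c : ℝ × ℝ → ℝ} (ha : Differentiable ℝ a)
    (hb : Differentiable ℝ b) (hc : Differentiable ℝ c) {x y z : ℝ} (hxyz : ![x, y, z] ≠ 0)
    (h : ∀ p, a p * x + b p * y + c p * z = 0) (p : ℝ × ℝ) :
    (wronskian a b c p).det = 0 := by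
  have hD := (((((ha p).hasFDerivAt.mul_const x).add ((hb p).hasFDerivAt.mul_const y)).add
    ((hc p).hasFDerivAt.mul_const z)).congr_of_eventuallyEq
      (Filter.Eventually.of_forall fun q => (h q).symm)).unique (hasFDerivAt_const (0 : ℝ) p)
  exact det_fin_three_eq_zero_of_linear_relation hxyz (h p)
    (by simpa [p1, mul_comm] using congrArg (· (1, 0)) hD)
    (by simpa [p2, mul_comm] using congrArg (· (0, 1)) hD)

/-- Step 3 of the locally conformally flat characterization: for the quadratic
polynomials `a, b, c` produced by Step 2, the remaining Weyl components
`W₁₃₃₄, W₂₄₃₄, W₃₄₃₄` vanish iff the coefficients satisfy the four relations. -/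
theorem walker_lcf_step3 (E F G H I J K L M N P Q R : ℝ)
    (a b c : ℝ × ℝ → ℝ)
    (hadef : ∀ p : ℝ × ℝ, a p = I / 2 * p.1 ^ 2 + J * p.1 + E * p.1 * p.2 + F * p.2 + K)
    (hbdef : ∀ p : ℝ × ℝ, b p = -(I / 2) * p.2 ^ 2 + L * p.2 + M * p.1 * p.2 + N * p.1 + R)
    (hcdef : ∀ p : ℝ × ℝ, c p = M / 2 * p.1 ^ 2 + P * p.1 + E / 2 * p.2 ^ 2 + G * p.2 + (Q + H)) :
    (∀ p : ℝ × ℝ,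
      c p * p11 a p / 12 - a p * p12 b p / 4 - c p * p22 b p / 6 + b p * p22 c p / 4 = 0 ∧
      c p * p11 a p / 6 + b p * p12 a p / 4 - c p * p22 b p / 12 - a p * p11 c p / 4 = 0 ∧
      b p * p1 a p * p2 c p - c p * p1 a p * p2 b p + c p * p2 a p * p1 b p
        - b p * p2 a p * p1 c p - a p * p1 b p * p2 c p + a p * p2 b p * p1 c p = 0)
    ↔
    (E * N - J * M + I * P = 0 ∧
     E * L - F * M + I * G = 0 ∧
     E * R - K * M + I * (H + Q) = 0 ∧
     K * (L * P - N * G) + R * (J * G - F * P) + (Q + H) * (F * N - J * L) = 0) := by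
  have ha : a = quadratic (I / 2) E 0 J F K := funext fun p => by rw [hadef, quadratic]; ring
  have hb : b = quadratic 0 M (-(I / 2)) N L R := funext fun p => by rw [hbdef, quadratic]; ring
  have hc : c = quadratic (M / 2) 0 (E / 2) P G (Q + H) :=
    funext fun p => by rw [hcdef, quadratic]; ring
  have hrel : ∀ p, a p * -M + b p * E + c p * I = (E * N - J * M + I * P) * p.1
      + (E * L - F * M + I * G) * p.2 + (E * R - K * M + I * (H + Q)) :=
    fun p => by rw [hadef, hbdef, hcdef]; ring
  have hW₁ : ∀ p, c p * p11 a p / 12 - a p * p12 b p / 4 - c p * p22 b p / 6 + b p * p22 c p / 4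
      = (a p * -M + b p * E + c p * I) / 4 := fun p => by
    simp only [ha, hb, hc, p11, p12, p22, p1_quadratic, p2_quadratic, quadratic]; ring
  have hW₂ : ∀ p, c p * p11 a p / 6 + b p * p12 a p / 4 - c p * p22 b p / 12 - a p * p11 c p / 4
      = (a p * -M + b p * E + c p * I) / 4 := fun p => by
    simp only [ha, hb, hc, p11, p12, p22, p1_quadratic, p2_quadratic, quadratic]; ring
  have hdet₀ : (wronskian a b c 0).det =
      -(K * (L * P - N * G) + R * (J * G - F * P) + (Q + H) * (F * N - J * L)) := by
    simp only [det_wronskian, ha, hb, hc, p1_quadratic, p2_quadratic, quadratic, Prod.fst_zero,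
      Prod.snd_zero]
    ring
  simp only [hW₁, hW₂, ← neg_det_wronskian, hrel, div_eq_zero_iff, four_ne_zero, or_false,
    and_self_left, neg_eq_zero, forall_and, forall_affine_eq_zero_iff, and_assoc]
  refine and_congr_right fun h₁ => and_congr_right fun h₂ => and_congr_right fun h₃ =>
    ⟨fun h => by linear_combination hdet₀ - h 0, fun h₄ p => ?_⟩
  by_cases hEMI : ![-M, E, I] = 0
  · obtain ⟨rfl, rfl, rfl⟩ : M = 0 ∧ E = 0 ∧ I = 0 := by simpa using hEMI
    simp only [det_wronskian, ha, hb, hc, p1_quadratic, p2_quadratic, quadratic]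
    linear_combination -h₄
  · exact det_wronskian_eq_zero_of_linear_relation (ha ▸ differentiable_quadratic _ _ _ _ _ _)
      (hb ▸ differentiable_quadratic _ _ _ _ _ _) (hc ▸ differentiable_quadratic _ _ _ _ _ _) hEMI
      (fun q => by rw [hrel, h₁, h₂, h₃]; ring) p
end
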